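/- arXiv:2301.02888 — 5 statements merged into one kernel-verified Lean document; each statement's English description precedes it below -/
import Mathlib

section
/- (Weierstrass+, Corollary 9.9) Suppose I ⊂ ℝ is a closed bounded interval, f : I → ℝ is continuous, and U, V ⊂ ℂ are domains with I ⊂ U and f(I) ⊂ V. Then for every ε > 0 there exists a polynomial p with real coefficients such that sup_{x∈I} |f(x) − p(x)| ≤ ε, every critical point of p in ℂ (zero of p′) lies in U, and every critical value of p lies in V. -/
open Complex Metric Set

section WeierstrassPlusAux
open Polynomial Real Set
set_option maxHeartbeats 1600000

lemma cheb_natDegree_le : ∀ n : ℕ, (Polynomial.Chebyshev.T ℝ (n : ℤ)).natDegree ≤ n := by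
  intro n
  induction n using Nat.strong_induction_on with
  | _ n ih =>
    match n with
    | 0 => simp [Polynomial.Chebyshev.T_zero]
    | 1 => simp [Polynomial.Chebyshev.T_one]
    | (k+2) =>
      have hk1 : (Polynomial.Chebyshev.T ℝ ((k+1 : ℕ) : ℤ)).natDegree ≤ k+1 := ih _ (by omega)
      have hk : (Polynomial.Chebyshev.T ℝ ((k : ℕ) : ℤ)).natDegree ≤ k := ih _ (by omega)
      have e : Polynomial.Chebyshev.T ℝ ((k+2 : ℕ) : ℤ)
          = 2 * Polynomial.X * Polynomial.Chebyshev.T ℝ ((k+1:ℕ) : ℤ) - Polynomial.Chebyshev.T ℝ ((k:ℕ) : ℤ) := by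
        push_cast
        exact Polynomial.Chebyshev.T_add_two ℝ (k : ℤ)
      rw [e]
      refine le_trans (Polynomial.natDegree_sub_le _ _) ?_
      refine max_le ?_ (by omega)
      refine le_trans (Polynomial.natDegree_mul_le) ?_
      have : (2 * Polynomial.X : Polynomial ℝ).natDegree ≤ 1 := by
        refine le_trans (Polynomial.natDegree_mul_le) ?_
        simp
      omega

lemma cos_lip (x y : ℝ) : |Real.cos x - Real.cos y| ≤ |x - y| := by
  rw [Real.cos_sub_cos]
  rw [abs_mul, abs_mul]
  have h1 : |Real.sin ((x+y)/2)| ≤ 1 := Real.abs_sin_le_one _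
  have h2 : |Real.sin ((x-y)/2)| ≤ |(x-y)/2| := Real.abs_sin_le_abs
  have h3 : |(x-y)/2| = |x-y|/2 := by rw [abs_div, _root_.abs_two]
  rw [h3] at h2
  rw [abs_neg, _root_.abs_two]
  nlinarith [abs_nonneg (Real.sin ((x+y)/2)), abs_nonneg (Real.sin ((x-y)/2)), abs_nonneg (x-y)]

lemma key (a b : ℝ) (hab : a < b) (f : ℝ → ℝ) (hf : ContinuousOn f (Set.Icc a b))
    (ε : ℝ) (hε : 0 < ε) :
    ∃ p : Polynomial ℝ, (∀ x ∈ Set.Icc a b, |f x - p.eval x| ≤ ε) ∧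
      (∀ z : ℂ, (Polynomial.derivative (p.map (algebraMap ℝ ℂ))).eval z = 0 →
        ∃ t : ℝ, t ∈ Set.Icc a b ∧ z = (t : ℂ)) := by
  obtain ⟨q, hq⟩ := exists_polynomial_near_of_continuousOn a b f hf (ε/2) (by positivity)
  -- uniform continuity of q on [a,b]
  have hqc : ContinuousOn (fun x => q.eval x) (Set.Icc a b) := q.continuous.continuousOn
  have huc := (isCompact_Icc (a := a) (b := b)).uniformContinuousOn_of_continuous hqc
  rw [Metric.uniformContinuousOn_iff] at huc
  obtain ⟨δ₀, hδ₀, hδ⟩ := huc (ε/2) (by positivity)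
  -- choose m
  obtain ⟨m, hm⟩ := exists_nat_gt ((b - a) * π / (2 * δ₀) + (q.natDegree + 1))
  have hπ : (0:ℝ) < π := Real.pi_pos
  have hmq : q.natDegree + 1 ≤ m := by
    have h0 : (0:ℝ) < (b - a) * π / (2 * δ₀) :=
      div_pos (mul_pos (by linarith) hπ) (by linarith)
    have h2 : q.natDegree + 1 < m := by
      exact_mod_cast (show ((q.natDegree + 1 : ℕ) : ℝ) < (m : ℝ) by push_cast; linarith)
    exact h2.le
  have hm1 : 1 ≤ m := le_trans (by omega) hmq
  have hmR : (b - a) * π / (2 * δ₀) < (m : ℝ) := by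
    have : (0:ℝ) ≤ (q.natDegree + 1 : ℝ) := by positivity
    push_cast at hm ⊢
    linarith
  have hm0 : (m:ℝ) ≠ 0 := by
    have : (0:ℕ) < m := hm1
    exact_mod_cast this.ne'
  set mid : ℝ := (a+b)/2 with hmid
  set rad : ℝ := (b-a)/2 with hrad
  have hradpos : 0 < rad := by simp [hrad]; linarith
  set A : Polynomial ℝ := Polynomial.C (1/rad) * Polynomial.X + Polynomial.C (-(mid/rad)) with hA
  have hAeval : ∀ x : ℝ, A.eval x = (x - mid)/rad := by
    intro x; simp [hA]; ring
  set Tm : Polynomial ℝ := Polynomial.Chebyshev.T ℝ (m : ℤ) with hTm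
  set p : Polynomial ℝ := q + Polynomial.C (ε/2) * (Tm.comp A) with hp
  have heval : ∀ x : ℝ, p.eval x = q.eval x + (ε/2) * (Tm.eval (A.eval x)) := by
    intro x; simp [hp, Polynomial.eval_comp]
  -- Chebyshev bound on [a,b]
  have hTb : ∀ x ∈ Set.Icc a b, |Tm.eval (A.eval x)| ≤ 1 := by
    intro x hx
    have h1 : -1 ≤ A.eval x := by
      rw [hAeval, le_div_iff₀ hradpos]
      have := hx.1; simp [hmid, hrad]; linarith
    have h2 : A.eval x ≤ 1 := by
      rw [hAeval, div_le_one hradpos]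
      have := hx.2; simp [hmid, hrad]; linarith
    have hc : Real.cos (Real.arccos (A.eval x)) = A.eval x := Real.cos_arccos h1 h2
    rw [← hc, hTm, Polynomial.Chebyshev.T_real_cos]
    exact Real.abs_cos_le_one _
  -- approximation bound
  have happrox : ∀ x ∈ Set.Icc a b, |f x - p.eval x| ≤ ε := by
    intro x hx
    have h1 := hq x hx
    have h2 := hTb x hx
    have he : f x - p.eval x = (f x - q.eval x) - ε/2 * (Tm.eval (A.eval x)) := by
      rw [heval]; ring
    rw [he]
    have h3 : |(f x - q.eval x) - ε/2 * (Tm.eval (A.eval x))|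
        ≤ |f x - q.eval x| + |ε/2 * (Tm.eval (A.eval x))| := abs_sub _ _
    have h4 : |ε/2 * (Tm.eval (A.eval x))| = (ε/2) * |Tm.eval (A.eval x)| := by
      rw [abs_mul, abs_of_pos (by positivity : (0:ℝ) < ε/2)]
    have h5 : (ε/2) * |Tm.eval (A.eval x)| ≤ (ε/2) * 1 :=
      mul_le_mul_of_nonneg_left h2 (by positivity)
    have h6 : |f x - q.eval x| = |q.eval x - f x| := abs_sub_comm _ _
    linarith [h3, h4.le, h5]
  have hmpos : (0:ℝ) < m := by exact_mod_cast hm1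
  -- nodes
  set θ : ℕ → ℝ := fun k => π - k * π / m with hθ
  set u : ℕ → ℝ := fun k => mid + rad * Real.cos (θ k) with hu
  have hθmem : ∀ k, k ≤ m → θ k ∈ Set.Icc 0 π := by
    intro k hk
    constructor
    · have h1 : (k:ℝ) * π / m ≤ π := by
        rw [div_le_iff₀ hmpos]
        have : (k:ℝ) ≤ m := by exact_mod_cast hk
        nlinarith
      simp only [hθ]; linarith
    · have h1 : 0 ≤ (k:ℝ) * π / m := by positivity
      simp only [hθ]; linarith
  have humem : ∀ k, k ≤ m → u k ∈ Set.Icc a b := by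
    intro k hk
    have h1 := Real.neg_one_le_cos (θ k)
    have h2 := Real.cos_le_one (θ k)
    have e1 : mid - rad = a := by rw [hmid, hrad]; ring
    have e2 : mid + rad = b := by rw [hmid, hrad]; ring
    constructor
    · simp only [hu]; nlinarith
    · simp only [hu]; nlinarith
  have humono : ∀ k l, k < l → l ≤ m → u k < u l := by
    intro k l hkl hl
    have hθlt : θ l < θ k := by
      simp only [hθ]
      have hkl' : (k:ℝ) < l := by exact_mod_cast hkl
      have hpm : (0:ℝ) < π/m := by positivity
      have h2 := mul_lt_mul_of_pos_right hkl' hpm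
      have e1 : (k:ℝ) * (π/↑m) = ↑k * π / ↑m := by ring
      have e2 : (l:ℝ) * (π/↑m) = ↑l * π / ↑m := by ring
      rw [e1, e2] at h2
      linarith
    have hcos : Real.cos (θ k) < Real.cos (θ l) :=
      Real.strictAntiOn_cos (hθmem l hl) (hθmem k (le_trans hkl.le hl)) hθlt
    simp only [hu]
    nlinarith
  have hgap : ∀ k, k < m → dist (u k) (u (k+1)) < δ₀ := by
    intro k hk
    have hθd : θ k - θ (k+1) = π / m := by
      simp only [hθ]; push_cast; field_simp; ring
    have h1 : |Real.cos (θ k) - Real.cos (θ (k+1))| ≤ π / m := by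
      have := cos_lip (θ k) (θ (k+1))
      rw [hθd] at this
      calc |Real.cos (θ k) - Real.cos (θ (k+1))| ≤ |θ k - θ (k+1)| := cos_lip _ _
        _ = π / m := by rw [hθd, abs_of_pos (by positivity)]
    have hd : dist (u k) (u (k+1)) = rad * |Real.cos (θ k) - Real.cos (θ (k+1))| := by
      rw [Real.dist_eq]
      simp only [hu]
      rw [show mid + rad * Real.cos (θ k) - (mid + rad * Real.cos (θ (k+1)))
        = rad * (Real.cos (θ k) - Real.cos (θ (k+1))) by ring, abs_mul,
        abs_of_pos hradpos]
    rw [hd]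
    have h2 : rad * |Real.cos (θ k) - Real.cos (θ (k+1))| ≤ rad * (π / m) :=
      mul_le_mul_of_nonneg_left h1 hradpos.le
    have h3 : rad * (π / m) < δ₀ := by
      rw [div_lt_iff₀ (by positivity : (0:ℝ) < 2 * δ₀)] at hmR
      have e : rad * (π/↑m) = (b-a) * π / (2*↑m) := by rw [hrad]; ring
      rw [e, div_lt_iff₀ (by positivity : (0:ℝ) < 2*↑m)]
      nlinarith [hmR]
    linarith
  have huA : ∀ k, A.eval (u k) = Real.cos (θ k) := by
    intro k
    rw [hAeval]
    simp only [hu]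
    field_simp
    ring
  have huT : ∀ k, Tm.eval (A.eval (u k)) = (-1:ℝ)^(m+k) := by
    intro k
    rw [huA, hTm, Polynomial.Chebyshev.T_real_cos]
    have e1 : ((m:ℤ):ℝ) * θ k = (m:ℝ) * π - k * π := by
      simp only [hθ]; push_cast; field_simp
    rw [e1, Real.cos_nat_mul_pi_sub]
    have e2 : Real.cos ((k:ℝ)*π) = (-1:ℝ)^k := by
      simpa using Real.cos_nat_mul_pi_sub 0 k
    rw [e2, pow_add]
  have hqd : ∀ k, k < m → |q.eval (u k) - q.eval (u (k+1))| < ε/2 := by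
    intro k hk
    have := hδ (u k) (humem k hk.le) (u (k+1)) (humem (k+1) hk) (hgap k hk)
    rwa [Real.dist_eq] at this
  have halt : ∀ k, k < m →
      p.eval (u k) - p.eval (u (k+1)) = (q.eval (u k) - q.eval (u (k+1))) + ε * (-1:ℝ)^(m+k) := by
    intro k hk
    rw [heval, heval, huT, huT]
    have e : m + (k+1) = (m+k) + 1 := by omega
    rw [e, pow_succ]
    ring
  have hstep : ∀ k, k < m →
      (Even (m+k) → p.eval (u (k+1)) < p.eval (u k)) ∧
      (¬ Even (m+k) → p.eval (u k) < p.eval (u (k+1))) := by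
    intro k hk
    have h1 := hqd k hk
    have h2 := halt k hk
    constructor
    · intro hev
      rw [hev.neg_one_pow] at h2
      have := abs_lt.mp h1
      linarith
    · intro hodd
      rw [(Nat.not_even_iff_odd.mp hodd).neg_one_pow] at h2
      have := abs_lt.mp h1
      linarith
  -- continuity of p eval
  have hpc : Continuous (fun x : ℝ => p.eval x) := p.continuous
  -- extrema
  have hex : ∀ k : ℕ, ∃ c : ℝ, (1 ≤ k ∧ k < m) →
      ((u (k-1) < c ∧ c < u (k+1)) ∧ (Polynomial.derivative p).eval c = 0 ∧
        ((Even (m+k) ∧ IsMaxOn (fun x => p.eval x) (Set.Icc (u (k-1)) (u (k+1))) c) ∨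
         (¬ Even (m+k) ∧ IsMinOn (fun x => p.eval x) (Set.Icc (u (k-1)) (u (k+1))) c))) := by
    intro k
    by_cases hk : 1 ≤ k ∧ k < m
    swap
    · exact ⟨0, fun h => absurd h hk⟩
    obtain ⟨hk1, hk2⟩ := hk
    have hlt1 : u (k-1) < u k := humono (k-1) k (by omega) hk2.le
    have hlt2 : u k < u (k+1) := humono k (k+1) (by omega) hk2
    have hne : (Set.Icc (u (k-1)) (u (k+1))).Nonempty := ⟨u k, hlt1.le, hlt2.le⟩
    have hcomp : IsCompact (Set.Icc (u (k-1)) (u (k+1))) := isCompact_Icc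
    have hkm1 : Even (m + (k-1)) ↔ ¬ Even (m+k) := by
      have : m + k = (m + (k-1)) + 1 := by omega
      rw [this, Nat.even_add_one]
      tauto
    by_cases hev : Even (m+k)
    · obtain ⟨c, hcmem, hcmax⟩ := hcomp.exists_isMaxOn hne hpc.continuousOn
      refine ⟨c, fun _ => ?_⟩
      have hck : p.eval (u k) ≤ p.eval c := hcmax ⟨hlt1.le, hlt2.le⟩
      have hv1 : p.eval (u (k-1)) < p.eval (u k) := by
        have := (hstep (k-1) (by omega)).2 (fun h => (hkm1.mp h) hev)
        have e : k - 1 + 1 = k := by omega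
        rwa [e] at this
      have hv2 : p.eval (u (k+1)) < p.eval (u k) := (hstep k hk2).1 hev
      have hc1 : u (k-1) < c := by
        rcases lt_or_eq_of_le hcmem.1 with h | h
        · exact h
        · exfalso; rw [← h] at hck; linarith
      have hc2 : c < u (k+1) := by
        rcases lt_or_eq_of_le hcmem.2 with h | h
        · exact h
        · exfalso; rw [h] at hck; linarith
      have hloc : IsLocalMax (fun x => p.eval x) c :=
        hcmax.isLocalMax (Icc_mem_nhds hc1 hc2)
      have hder : (Polynomial.derivative p).eval c = 0 := by
        rw [← Polynomial.deriv]
        exact hloc.deriv_eq_zero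
      exact ⟨⟨hc1, hc2⟩, hder, Or.inl ⟨hev, hcmax⟩⟩
    · obtain ⟨c, hcmem, hcmin⟩ := hcomp.exists_isMinOn hne hpc.continuousOn
      refine ⟨c, fun _ => ?_⟩
      have hck : p.eval c ≤ p.eval (u k) := hcmin ⟨hlt1.le, hlt2.le⟩
      have hv1 : p.eval (u k) < p.eval (u (k-1)) := by
        have := (hstep (k-1) (by omega)).1 (hkm1.mpr hev)
        have e : k - 1 + 1 = k := by omega
        rwa [e] at this
      have hv2 : p.eval (u k) < p.eval (u (k+1)) := (hstep k hk2).2 hev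
      have hc1 : u (k-1) < c := by
        rcases lt_or_eq_of_le hcmem.1 with h | h
        · exact h
        · exfalso; rw [← h] at hck; linarith
      have hc2 : c < u (k+1) := by
        rcases lt_or_eq_of_le hcmem.2 with h | h
        · exact h
        · exfalso; rw [h] at hck; linarith
      have hloc : IsLocalMin (fun x => p.eval x) c :=
        hcmin.isLocalMin (Icc_mem_nhds hc1 hc2)
      have hder : (Polynomial.derivative p).eval c = 0 := by
        rw [← Polynomial.deriv]
        exact hloc.deriv_eq_zero
      exact ⟨⟨hc1, hc2⟩, hder, Or.inr ⟨hev, hcmin⟩⟩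
  choose c hc using hex
  -- distinctness
  have hcdist : ∀ j k, 1 ≤ j → j < k → k < m → c j ≠ c k := by
    intro j k hj hjk hkm
    obtain ⟨⟨hj1, hj2⟩, hjd, hjmm⟩ := hc j ⟨hj, by omega⟩
    obtain ⟨⟨hk1, hk2⟩, hkd, hkmm⟩ := hc k ⟨by omega, hkm⟩
    by_cases hadj : k = j + 1
    · subst hadj
      have hujmem : u j ∈ Set.Icc (u (j-1)) (u (j+1)) :=
        ⟨(humono (j-1) j (by omega) (by omega)).le, (humono j (j+1) (by omega) (by omega)).le⟩
      have hukmem : u (j+1) ∈ Set.Icc (u (j+1-1)) (u (j+1+1)) :=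
        ⟨(humono (j+1-1) (j+1) (by omega) (by omega)).le,
         (humono (j+1) (j+1+1) (by omega) (by omega)).le⟩
      have hpar : Even (m+j) ↔ ¬ Even (m+(j+1)) := by
        rw [show m+(j+1) = (m+j)+1 by omega, Nat.even_add_one]; tauto
      have h3 : ∀ hev : Even (m+j), p.eval (u (j+1)) < p.eval (u j) :=
        fun hev => (hstep j (by omega)).1 hev
      have h3' : ∀ hev : ¬ Even (m+j), p.eval (u j) < p.eval (u (j+1)) :=
        fun hev => (hstep j (by omega)).2 hev
      rcases hjmm with ⟨hev, hmax⟩ | ⟨hev, hmin⟩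
      · rcases hkmm with ⟨hev', _⟩ | ⟨_, hmin'⟩
        · exact absurd hev' (hpar.mp hev)
        · have h1 : p.eval (u j) ≤ p.eval (c j) := hmax hujmem
          have h2 : p.eval (c (j+1)) ≤ p.eval (u (j+1)) := hmin' hukmem
          intro heq
          rw [heq] at h1
          have := h3 hev
          linarith
      · rcases hkmm with ⟨_, hmax'⟩ | ⟨hev', _⟩
        · have h1 : p.eval (c j) ≤ p.eval (u j) := hmin hujmem
          have h2 : p.eval (u (j+1)) ≤ p.eval (c (j+1)) := hmax' hukmem
          intro heq
          rw [heq] at h1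
          have := h3' hev
          linarith
        · exact absurd (hpar.mpr hev') hev
    · have hle : u (j+1) ≤ u (k-1) := by
        rcases eq_or_lt_of_le (show j+1 ≤ k-1 by omega) with h | h
        · rw [h]
        · exact (humono (j+1) (k-1) h (by omega)).le
      have : c j < c k := lt_trans (lt_of_lt_of_le hj2 hle) hk1
      exact this.ne
  -- the finset of critical points
  set F : Finset ℝ := (Finset.Ico 1 m).image c with hF
  have hFcard : F.card = m - 1 := by
    rw [hF, Finset.card_image_of_injOn, Nat.card_Ico]
    intro j hj k hk hjk
    simp only [Finset.coe_Ico, Set.mem_Ico] at hj hk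
    by_contra hne
    rcases lt_trichotomy j k with h | h | h
    · exact hcdist j k hj.1 h hk.2 hjk
    · exact hne h
    · exact hcdist k j hk.1 h hj.2 hjk.symm
  -- degree bounds
  have hdeg : p.natDegree ≤ m := by
    rw [hp]
    refine le_trans (Polynomial.natDegree_add_le _ _) (max_le (by omega) ?_)
    refine le_trans (Polynomial.natDegree_C_mul_le _ _) ?_
    refine le_trans (Polynomial.natDegree_comp_le) ?_
    have h1 : Tm.natDegree ≤ m := cheb_natDegree_le m
    have h2 : A.natDegree ≤ 1 := by rw [hA]; exact Polynomial.natDegree_linear_le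
    calc Tm.natDegree * A.natDegree ≤ m * 1 := Nat.mul_le_mul h1 h2
      _ = m := by omega
  have hDne : Polynomial.derivative p ≠ 0 := by
    intro h0
    have hderiv : ∀ x : ℝ, deriv (fun y : ℝ => p.eval y) x = 0 := by
      intro x; rw [Polynomial.deriv, h0]; simp
    have hconst := is_const_of_deriv_eq_zero p.differentiable hderiv (u 0) (u 1)
    have hstep0 := hstep 0 (by omega)
    have hc2 : p.eval (u 0) = p.eval (u 1) := hconst
    by_cases hev : Even (m+0)
    · have := hstep0.1 hev; linarith
    · have := hstep0.2 hev; linarith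
  -- complex part
  set P : Polynomial ℂ := p.map (algebraMap ℝ ℂ) with hPdef
  have hDC : Polynomial.derivative P = (Polynomial.derivative p).map (algebraMap ℝ ℂ) := by
    rw [hPdef, Polynomial.derivative_map]
  have hDCne : Polynomial.derivative P ≠ 0 := by
    rw [hDC]; exact Polynomial.map_ne_zero hDne
  have hDCdeg : (Polynomial.derivative P).natDegree ≤ m - 1 := by
    rw [hDC, Polynomial.natDegree_map_eq_of_injective Complex.ofReal_injective]
    have := Polynomial.natDegree_derivative_le p
    omega
  have hcroot : ∀ k, 1 ≤ k → k < m →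
      (Polynomial.derivative P).eval ((c k : ℂ)) = 0 := by
    intro k h1 h2
    have hr : (Polynomial.derivative p).eval (c k) = 0 := (hc k ⟨h1, h2⟩).2.1
    rw [hDC, Polynomial.eval_map]
    have : ((c k : ℝ) : ℂ) = algebraMap ℝ ℂ (c k) := by
      rw [Complex.coe_algebraMap]
    rw [this, Polynomial.eval₂_at_apply, hr, map_zero]
  refine ⟨p, happrox, ?_⟩
  intro z hz
  by_cases hzF : z ∈ F.image (fun t : ℝ => (t:ℂ))
  · obtain ⟨t, htF, rfl⟩ := Finset.mem_image.mp hzF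
    obtain ⟨k, hk, rfl⟩ := Finset.mem_image.mp htF
    rw [Finset.mem_Ico] at hk
    obtain ⟨⟨hck1, hck2⟩, _, _⟩ := hc k hk
    have hlow : a ≤ u (k-1) := (humem (k-1) (by omega)).1
    have hhigh : u (k+1) ≤ b := (humem (k+1) (by omega)).2
    exact ⟨c k, ⟨by linarith, by linarith⟩, rfl⟩
  · exfalso
    have hsub : insert z (F.image (fun t : ℝ => (t:ℂ))) ⊆
        (Polynomial.derivative P).roots.toFinset := by
      intro w hw
      rw [Multiset.mem_toFinset, Polynomial.mem_roots']
      rcases Finset.mem_insert.mp hw with h | h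
      · subst h; exact ⟨hDCne, hz⟩
      · obtain ⟨t, htF, rfl⟩ := Finset.mem_image.mp h
        obtain ⟨k, hk, rfl⟩ := Finset.mem_image.mp htF
        rw [Finset.mem_Ico] at hk
        exact ⟨hDCne, hcroot k hk.1 hk.2⟩
    have h1 : (insert z (F.image (fun t : ℝ => (t:ℂ)))).card = m := by
      rw [Finset.card_insert_of_notMem hzF,
        Finset.card_image_of_injective _ Complex.ofReal_injective, hFcard]
      omega
    have h2 := Finset.card_le_card hsub
    have h3 := Multiset.toFinset_card_le (Polynomial.derivative P).roots
    have h4 := Polynomial.card_roots' (Polynomial.derivative P)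
    omega

end WeierstrassPlusAux

/-- **Weierstrass+** (Corollary 9.9). If `I = [a,b] ⊆ ℝ`, `f : I → ℝ` is continuous, and
`U, V ⊆ ℂ` are domains with `I ⊆ U` and `f(I) ⊆ V`, then for every `ε > 0` there is a
polynomial `p` with real coefficients with `‖f - p‖_I ≤ ε`, all complex critical points of
`p` in `U`, and all critical values of `p` in `V`. -/
theorem weierstrass_plus
    (a b : ℝ) (hab : a ≤ b) (f : ℝ → ℝ) (hf : ContinuousOn f (Set.Icc a b))
    (U V : Set ℂ) (hUopen : IsOpen U) (hUconn : IsConnected U)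
    (hVopen : IsOpen V) (hVconn : IsConnected V)
    (hIU : (fun x : ℝ => (x : ℂ)) '' Set.Icc a b ⊆ U)
    (hfV : (fun x : ℝ => (f x : ℂ)) '' Set.Icc a b ⊆ V)
    (ε : ℝ) (hε : 0 < ε) :
    ∃ p : Polynomial ℝ,
      (∀ x ∈ Set.Icc a b, |f x - p.eval x| ≤ ε) ∧
      (∀ z : ℂ, (Polynomial.derivative (p.map (algebraMap ℝ ℂ))).eval z = 0 → z ∈ U) ∧
      (∀ z : ℂ, (Polynomial.derivative (p.map (algebraMap ℝ ℂ))).eval z = 0 →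
        (p.map (algebraMap ℝ ℂ)).eval z ∈ V) := by
  rcases eq_or_lt_of_le hab with heq | hlt
  · -- degenerate case a = b : use a linear polynomial
    refine ⟨Polynomial.X + Polynomial.C (f a - a), ?_, ?_, ?_⟩
    · intro x hx
      have hx' : x = a := le_antisymm (heq ▸ hx.2) hx.1
      subst hx'
      simp
      exact hε.le
    · intro z hz
      exfalso
      simp only [Polynomial.map_add, Polynomial.map_X, Polynomial.map_C,
        Polynomial.derivative_add, Polynomial.derivative_X, Polynomial.derivative_C,
        add_zero, Polynomial.eval_one] at hz
      exact one_ne_zero hz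
    · intro z hz
      exfalso
      simp only [Polynomial.map_add, Polynomial.map_X, Polynomial.map_C,
        Polynomial.derivative_add, Polynomial.derivative_X, Polynomial.derivative_C,
        add_zero, Polynomial.eval_one] at hz
      exact one_ne_zero hz
  · -- main case a < b
    have hKc : IsCompact ((fun x : ℝ => ((f x : ℂ))) '' Set.Icc a b) := by
      apply IsCompact.image_of_continuousOn isCompact_Icc
      exact Complex.continuous_ofReal.comp_continuousOn hf
    obtain ⟨δ, hδpos, hδsub⟩ := hKc.exists_thickening_subset_open hVopen hfV
    set ε' : ℝ := min ε (δ/2) with hε'def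
    have hε'pos : 0 < ε' := lt_min hε (by linarith)
    obtain ⟨p, hp1, hp2⟩ := key a b hlt f hf ε' hε'pos
    refine ⟨p, fun x hx => le_trans (hp1 x hx) (min_le_left _ _), ?_, ?_⟩
    · intro z hz
      obtain ⟨t, ht, rfl⟩ := hp2 z hz
      exact hIU ⟨t, ht, rfl⟩
    · intro z hz
      obtain ⟨t, ht, rfl⟩ := hp2 z hz
      have he : (p.map (algebraMap ℝ ℂ)).eval ((t:ℂ)) = ((p.eval t : ℝ) : ℂ) := by
        have hco : ((t:ℝ):ℂ) = algebraMap ℝ ℂ t := by rw [Complex.coe_algebraMap]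
        rw [Polynomial.eval_map, hco, Polynomial.eval₂_at_apply, Complex.coe_algebraMap]
      rw [he]
      apply hδsub
      rw [Metric.mem_thickening_iff]
      refine ⟨(f t : ℂ), ⟨t, ht, rfl⟩, ?_⟩
      have hdist : dist ((p.eval t : ℝ) : ℂ) ((f t : ℝ) : ℂ) = dist (p.eval t) (f t) :=
        Complex.isometry_ofReal.dist_eq _ _
      rw [hdist, Real.dist_eq]
      have h1 := hp1 t ht
      have h2 : ε' ≤ δ/2 := min_le_right _ _
      rw [abs_sub_comm] at h1
      linarith
end

section
/- (Proposition 2.5) There exists δ₀ > 0 such that for all 0 < δ < δ₀ and all 0 < c < 1, sup_{n∈ℕ} sup_{|z|<c} |𝓑_{n,δ,c}(z) − z| < 4δ, where 𝓑_{n,δ,c} is the Blaschke product defined below. -/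
open Complex Metric Set

/-- The Blaschke product `𝓑_{n,δ,c}(z) = z · ∏_{j=0}^{n-1} (e^{2πij/n} z + r)/(1 + r e^{2πij/n} z)`
with `r = 1 - δ(1-c)/n` (Definition 2.4). -/
noncomputable def blaschkeB (n : ℕ) (δ c : ℝ) (z : ℂ) : ℂ :=
  z * ∏ j ∈ Finset.range n,
    (Complex.exp (((2 * Real.pi : ℝ) : ℂ) * Complex.I * (j : ℂ) / (n : ℂ)) * z
        + ((1 - δ * (1 - c) / n : ℝ) : ℂ)) /
      (1 + ((1 - δ * (1 - c) / n : ℝ) : ℂ) *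
        Complex.exp (((2 * Real.pi : ℝ) : ℂ) * Complex.I * (j : ℂ) / (n : ℂ)) * z)

/-- If each factor is within `a` of `1`, the product is within `(1+a)^n - 1` of `1`. -/
lemma prod_sub_one_norm_le (f : ℕ → ℂ) (a : ℝ) (ha : 0 ≤ a) :
    ∀ n : ℕ, (∀ j ∈ Finset.range n, ‖f j - 1‖ ≤ a) →
      ‖(∏ j ∈ Finset.range n, f j) - 1‖ ≤ (1 + a) ^ n - 1 := by
  intro n
  induction n with
  | zero => simp
  | succ n ih =>
    intro h
    have hP : ‖(∏ j ∈ Finset.range n, f j) - 1‖ ≤ (1 + a) ^ n - 1 :=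
      ih fun j hj => h j (Finset.mem_range.mpr (Nat.lt_succ_of_lt (Finset.mem_range.mp hj)))
    have hfn : ‖f n - 1‖ ≤ a := h n (Finset.mem_range.mpr (Nat.lt_succ_self n))
    have hQ : (1 : ℝ) ≤ (1 + a) ^ n := one_le_pow₀ (by linarith)
    have key : (∏ j ∈ Finset.range (n + 1), f j) - 1 =
        ((∏ j ∈ Finset.range n, f j) - 1) * (f n - 1) +
          ((∏ j ∈ Finset.range n, f j) - 1) + (f n - 1) := by
      rw [Finset.prod_range_succ]; ring
    rw [key]
    have h1 : ‖((∏ j ∈ Finset.range n, f j) - 1) * (f n - 1)‖ ≤ ((1 + a) ^ n - 1) * a := by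
      rw [norm_mul]
      exact mul_le_mul hP hfn (norm_nonneg _) (by linarith)
    calc ‖((∏ j ∈ Finset.range n, f j) - 1) * (f n - 1) +
          ((∏ j ∈ Finset.range n, f j) - 1) + (f n - 1)‖
        ≤ ‖((∏ j ∈ Finset.range n, f j) - 1) * (f n - 1) +
          ((∏ j ∈ Finset.range n, f j) - 1)‖ + ‖f n - 1‖ := norm_add_le _ _
      _ ≤ ‖((∏ j ∈ Finset.range n, f j) - 1) * (f n - 1)‖ +
          ‖(∏ j ∈ Finset.range n, f j) - 1‖ + ‖f n - 1‖ := by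
            gcongr; exact norm_add_le _ _
      _ ≤ ((1 + a) ^ n - 1) * a + ((1 + a) ^ n - 1) + a := by linarith
      _ = (1 + a) ^ (n + 1) - 1 := by ring

/-- **Proposition 2.5.** There is `δ₀ > 0` such that for all `0 < δ < δ₀` and all `0 < c < 1`,
`sup_{n ∈ ℕ} sup_{|z| < c} |𝓑_{n,δ,c}(z) - z| < 4δ`. (The supremum being `< 4δ` is expressed
by the existence of an upper bound `s < 4δ`.) -/
theorem blaschke_close_to_id :
    ∃ δ₀ : ℝ, 0 < δ₀ ∧ ∀ δ : ℝ, 0 < δ → δ < δ₀ → ∀ c : ℝ, 0 < c → c < 1 →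
      ∃ s : ℝ, s < 4 * δ ∧
        ∀ n : ℕ, 1 ≤ n → ∀ z : ℂ, ‖z‖ < c → ‖blaschkeB n δ c z - z‖ ≤ s := by
  refine ⟨1/2, by norm_num, ?_⟩
  intro δ hδ hδ2 c hc hc1
  refine ⟨c * (2 * δ + 4 * δ ^ 2), ?_, ?_⟩
  · nlinarith
  intro n hn z hz
  have hn0 : (0 : ℝ) < n := by exact_mod_cast hn
  set r : ℝ := 1 - δ * (1 - c) / n with hr
  have hρpos : 0 < δ * (1 - c) / n := div_pos (by nlinarith) hn0
  have hρle : δ * (1 - c) / n ≤ δ / n :=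
    (div_le_div_iff_of_pos_right hn0).mpr (by nlinarith)
  have hr1 : r < 1 := by simp [hr]; linarith
  have hr0 : 0 < r := by
    have : δ * (1 - c) / n ≤ δ := by
      calc δ * (1 - c) / n ≤ δ / n := hρle
        _ ≤ δ / 1 := by apply div_le_div_of_nonneg_left hδ.le one_pos ?_; exact_mod_cast hn
        _ = δ := by ring
    simp [hr]; linarith
  -- per-factor bound
  have hfac : ∀ j ∈ Finset.range n,
      ‖(Complex.exp (((2 * Real.pi : ℝ) : ℂ) * Complex.I * (j : ℂ) / (n : ℂ)) * z
        + ((r : ℝ) : ℂ)) /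
      (1 + ((r : ℝ) : ℂ) *
        Complex.exp (((2 * Real.pi : ℝ) : ℂ) * Complex.I * (j : ℂ) / (n : ℂ)) * z) - 1‖
        ≤ 2 * δ / n := by
    intro j hj
    set e : ℂ := Complex.exp (((2 * Real.pi : ℝ) : ℂ) * Complex.I * (j : ℂ) / (n : ℂ)) with he
    have hne : ‖e‖ = 1 := by
      have : ((2 * Real.pi : ℝ) : ℂ) * Complex.I * (j : ℂ) / (n : ℂ)
          = ((2 * Real.pi * j / n : ℝ) : ℂ) * Complex.I := by push_cast; ring
      rw [he, this]
      exact Complex.norm_exp_ofReal_mul_I _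
    set w : ℂ := e * z with hw
    have hwz : ‖w‖ < c := by rw [hw, norm_mul, hne, one_mul]; exact hz
    set D : ℂ := 1 + (r : ℂ) * e * z with hD
    have hDnorm : 1 - c ≤ ‖D‖ := by
      have h1 : (1 : ℝ) ≤ ‖D‖ + ‖(r : ℂ) * e * z‖ := by
        have hD1 : D - (r : ℂ) * e * z = 1 := by rw [hD]; ring
        calc (1 : ℝ) = ‖D - (r : ℂ) * e * z‖ := by rw [hD1, norm_one]
          _ ≤ ‖D‖ + ‖(r : ℂ) * e * z‖ := norm_sub_le _ _
      have h2 : ‖(r : ℂ) * e * z‖ ≤ c := by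
        rw [norm_mul, norm_mul, hne, Complex.norm_real, Real.norm_eq_abs,
          abs_of_pos hr0]
        nlinarith [norm_nonneg z, hz]
      linarith
    have hDne : D ≠ 0 := by
      intro h
      rw [h, norm_zero] at hDnorm; linarith
    have key : (e * z + (r : ℂ)) / D - 1 = ((1 - (r : ℂ)) * (w - 1)) / D := by
      rw [div_sub_one hDne, hw, hD]
      congr 1
      ring
    rw [key, norm_div, div_le_iff₀ (by linarith : (0:ℝ) < ‖D‖)]
    have hnum : ‖(1 - (r : ℂ)) * (w - 1)‖ ≤ (δ * (1 - c) / n) * (1 + c) := by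
      rw [norm_mul]
      have h1 : ‖(1 : ℂ) - (r : ℂ)‖ = δ * (1 - c) / n := by
        rw [← Complex.ofReal_one, ← Complex.ofReal_sub, Complex.norm_real,
          Real.norm_eq_abs, hr]
        rw [abs_of_pos (by linarith : (0:ℝ) < 1 - r)] <;> simp [hr]
      have h2 : ‖w - 1‖ ≤ 1 + c := by
        have := norm_sub_le w 1
        rw [norm_one] at this
        linarith
      rw [h1]
      exact mul_le_mul_of_nonneg_left h2 hρpos.le
    calc ‖(1 - (r : ℂ)) * (w - 1)‖ ≤ (δ * (1 - c) / n) * (1 + c) := hnum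
      _ ≤ (2 * δ / n) * (1 - c) := by
          rw [div_mul_eq_mul_div, div_mul_eq_mul_div]
          exact (div_le_div_iff_of_pos_right hn0).mpr
            (by nlinarith [mul_nonneg hδ.le (sq_nonneg (1 - c))])
      _ ≤ (2 * δ / n) * ‖D‖ := by
          apply mul_le_mul_of_nonneg_left hDnorm (by positivity)
  -- product bound
  have hprod := prod_sub_one_norm_le
    (fun j => (Complex.exp (((2 * Real.pi : ℝ) : ℂ) * Complex.I * (j : ℂ) / (n : ℂ)) * z
        + ((r : ℝ) : ℂ)) /
      (1 + ((r : ℝ) : ℂ) *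
        Complex.exp (((2 * Real.pi : ℝ) : ℂ) * Complex.I * (j : ℂ) / (n : ℂ)) * z))
    (2 * δ / n) (by positivity) n hfac
  have hpow : (1 + 2 * δ / n) ^ n ≤ Real.exp (2 * δ) := by
    have h1 : 1 + 2 * δ / n ≤ Real.exp (2 * δ / n) := by
      have := Real.add_one_le_exp (2 * δ / n)
      linarith
    calc (1 + 2 * δ / n) ^ n ≤ Real.exp (2 * δ / n) ^ n := by
          apply pow_le_pow_left₀ (by positivity) h1
      _ = Real.exp (n * (2 * δ / n)) := by rw [Real.exp_nat_mul]
      _ = Real.exp (2 * δ) := by rw [mul_div_cancel₀]; exact ne_of_gt hn0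
  have hexp : Real.exp (2 * δ) - 1 ≤ 2 * δ + 4 * δ ^ 2 := by
    have := Real.abs_exp_sub_one_sub_id_le (x := 2 * δ)
      (by rw [abs_of_pos (by linarith)]; linarith)
    rw [abs_le] at this
    nlinarith [this.2]
  have hfinal : ‖(∏ j ∈ Finset.range n,
      (Complex.exp (((2 * Real.pi : ℝ) : ℂ) * Complex.I * (j : ℂ) / (n : ℂ)) * z
        + ((r : ℝ) : ℂ)) /
      (1 + ((r : ℝ) : ℂ) *
        Complex.exp (((2 * Real.pi : ℝ) : ℂ) * Complex.I * (j : ℂ) / (n : ℂ)) * z)) - 1‖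
      ≤ 2 * δ + 4 * δ ^ 2 := by
    calc _ ≤ (1 + 2 * δ / n) ^ n - 1 := hprod
      _ ≤ Real.exp (2 * δ) - 1 := by linarith
      _ ≤ 2 * δ + 4 * δ ^ 2 := hexp
  have : blaschkeB n δ c z - z = z * ((∏ j ∈ Finset.range n,
      (Complex.exp (((2 * Real.pi : ℝ) : ℂ) * Complex.I * (j : ℂ) / (n : ℂ)) * z
        + ((r : ℝ) : ℂ)) /
      (1 + ((r : ℝ) : ℂ) *
        Complex.exp (((2 * Real.pi : ℝ) : ℂ) * Complex.I * (j : ℂ) / (n : ℂ)) * z)) - 1) := by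
    rw [blaschkeB, hr]; ring
  rw [this, norm_mul]
  apply mul_le_mul hz.le hfinal (norm_nonneg _) hc.le
end

section
/- (Proposition 2.6) For every 0 < δ < 1 and 0 < c < 1 there exists a constant C < ∞, depending on δ and c but not on n, such that n/C < |𝓑′_{n,δ,c}(z)| < nC for all z on the unit circle 𝕋 = {z ∈ ℂ : |z| = 1} and all n ∈ ℕ, where 𝓑_{n,δ,c} is the Blaschke product defined below. -/
open Complex Metric Set

private lemma prod_range_sub_root {n : ℕ} (hn : n ≠ 0) (y : ℂ) :
    ∏ j ∈ Finset.range n, (y - Complex.exp (2 * Real.pi * Complex.I / n) ^ j) = y ^ n - 1 := by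
  have hζ := Complex.isPrimitiveRoot_exp n hn
  have h := Polynomial.X_pow_sub_one_eq_prod (Nat.pos_of_ne_zero hn) hζ
  have h2 := congrArg (Polynomial.eval y) h
  simp only [Polynomial.eval_sub, Polynomial.eval_pow, Polynomial.eval_X, Polynomial.eval_one,
    Polynomial.eval_prod, Polynomial.eval_sub, Polynomial.eval_C] at h2
  rw [h2]
  have hroots : Polynomial.nthRoots n (1 : ℂ)
      = (Multiset.range n).map (Complex.exp (2 * Real.pi * Complex.I / n) ^ ·) := by
    simpa using hζ.nthRoots_eq (one_pow n)
  rw [Polynomial.nthRootsFinset, hroots, Multiset.toFinset_map, ← Finset.range_val,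
    Finset.val_toFinset, Finset.prod_image]
  intro i hi j hj hij
  exact hζ.injOn_pow (by simpa using hi) (by simpa using hj) hij

private lemma prod_range_sub_pow {n : ℕ} (hn : n ≠ 0) (x a : ℂ) :
    ∏ j ∈ Finset.range n, (x - Complex.exp (2 * Real.pi * Complex.I / n) ^ j * a)
      = x ^ n - a ^ n := by
  rcases eq_or_ne a 0 with rfl | ha
  · simp [zero_pow hn]
  · have key := prod_range_sub_root hn (x / a)
    have h : ∏ j ∈ Finset.range n, (x - Complex.exp (2 * Real.pi * Complex.I / n) ^ j * a)
        = ∏ j ∈ Finset.range n, (a * (x / a - Complex.exp (2 * Real.pi * Complex.I / n) ^ j)) := by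
      refine Finset.prod_congr rfl fun j _ => ?_
      field_simp
    rw [h, Finset.prod_mul_distrib, Finset.prod_const, key, Finset.card_range]
    rw [div_pow, mul_sub, mul_one, mul_div_assoc', mul_comm (a ^ n), mul_div_assoc,
      div_self (pow_ne_zero n ha), mul_one]

private lemma blaschkeB_closed (n : ℕ) (hn : n ≠ 0) (δ c : ℝ) (z : ℂ) :
    blaschkeB n δ c z =
      z * (((1 - δ * (1 - c) / n : ℝ) : ℂ) ^ n - (-1) ^ n * z ^ n) /
        (1 - (-1) ^ n * ((1 - δ * (1 - c) / n : ℝ) : ℂ) ^ n * z ^ n) := by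
  set r : ℂ := ((1 - δ * (1 - c) / n : ℝ) : ℂ) with hr
  have hexp : ∀ j : ℕ,
      Complex.exp (((2 * Real.pi : ℝ) : ℂ) * Complex.I * (j : ℂ) / (n : ℂ))
        = Complex.exp (2 * Real.pi * Complex.I / n) ^ j := by
    intro j
    rw [← Complex.exp_nat_mul]
    congr 1
    push_cast
    ring
  unfold blaschkeB
  simp only [hexp, ← hr]
  rw [Finset.prod_div_distrib]
  have h1 : ∏ j ∈ Finset.range n, (Complex.exp (2 * Real.pi * Complex.I / n) ^ j * z + r)
      = r ^ n - (-1) ^ n * z ^ n := by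
    rw [show r ^ n - (-1) ^ n * z ^ n = r ^ n - (-z) ^ n by rw [neg_pow]; ring,
      ← prod_range_sub_pow hn r (-z)]
    exact Finset.prod_congr rfl fun j _ => by ring
  have h2 : ∏ j ∈ Finset.range n, ((1 : ℂ) + r * Complex.exp (2 * Real.pi * Complex.I / n) ^ j * z)
      = 1 - (-1) ^ n * r ^ n * z ^ n := by
    rw [show (1 : ℂ) - (-1) ^ n * r ^ n * z ^ n = 1 ^ n - (-(r * z)) ^ n by
        rw [neg_pow (r * z), mul_pow]; ring,
      ← prod_range_sub_pow hn 1 (-(r * z))]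
    exact Finset.prod_congr rfl fun j _ => by ring
  rw [h1, h2, mul_div_assoc]

private lemma deriv_closed_norm {n : ℕ} (hn : n ≠ 0) (r : ℝ) (hr0 : 0 ≤ r) (hr1 : r < 1)
    (z : ℂ) (hz : ‖z‖ = 1) :
    ‖deriv (fun w : ℂ => w * ((r:ℂ) ^ n - (-1) ^ n * w ^ n) /
        (1 - (-1) ^ n * (r:ℂ) ^ n * w ^ n)) z‖
      = (‖(r:ℂ) ^ n - (-1) ^ n * z ^ n‖ ^ 2 + n * (1 - r ^ (2 * n)))
          / ‖(r:ℂ) ^ n - (-1) ^ n * z ^ n‖ ^ 2 := by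
  have hrn1 : r ^ n < 1 := pow_lt_one₀ hr0 hr1 hn
  have he : ((-1:ℂ) ^ n) * ((-1:ℂ) ^ n) = 1 := by
    rw [← mul_pow]; norm_num
  have hne : ‖((-1:ℂ)) ^ n‖ = 1 := by
    rw [norm_pow, norm_neg, norm_one, one_pow]
  have hnz : ‖z ^ n‖ = 1 := by rw [norm_pow, hz, one_pow]
  have hnsq : Complex.normSq z = 1 := by
    rw [Complex.normSq_eq_norm_sq, hz]; norm_num
  have hz1 : z * (starRingEnd ℂ) z = 1 := by
    rw [Complex.mul_conj, hnsq]; norm_num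
  have hzcn : z ^ n * ((starRingEnd ℂ) z) ^ n = 1 := by
    rw [← mul_pow, hz1, one_pow]
  have hNlb : (1 : ℝ) - r ^ n ≤ ‖(r:ℂ) ^ n - (-1) ^ n * z ^ n‖ := by
    calc (1:ℝ) - r ^ n = ‖(-1:ℂ) ^ n * z ^ n‖ - ‖((r:ℂ)) ^ n‖ := by
          rw [norm_mul, hne, hnz, ← Complex.ofReal_pow, Complex.norm_real]
          rw [Real.norm_eq_abs, _root_.abs_of_nonneg (pow_nonneg hr0 n)]
          ring
      _ ≤ ‖(-1:ℂ) ^ n * z ^ n - (r:ℂ) ^ n‖ := norm_sub_norm_le _ _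
      _ = ‖(r:ℂ) ^ n - (-1) ^ n * z ^ n‖ := norm_sub_rev _ _
  have hNpos : 0 < ‖(r:ℂ) ^ n - (-1) ^ n * z ^ n‖ := lt_of_lt_of_le (by linarith) hNlb
  have hN0 : (r:ℂ) ^ n - (-1) ^ n * z ^ n ≠ 0 := by
    intro h; rw [h, norm_zero] at hNpos; exact lt_irrefl _ hNpos
  have hconjN : (starRingEnd ℂ) ((r:ℂ) ^ n - (-1) ^ n * z ^ n)
      = (r:ℂ) ^ n - (-1) ^ n * ((starRingEnd ℂ) z) ^ n := by
    simp [map_sub, map_mul, map_pow, Complex.conj_ofReal]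
  have hD_eq : (1 : ℂ) - (-1) ^ n * (r:ℂ) ^ n * z ^ n
      = -((-1:ℂ) ^ n) * z ^ n * (starRingEnd ℂ) ((r:ℂ) ^ n - (-1) ^ n * z ^ n) := by
    rw [hconjN]
    linear_combination (-(z ^ n * ((starRingEnd ℂ) z) ^ n)) * he - hzcn
  have hDnorm : ‖(1 : ℂ) - (-1) ^ n * (r:ℂ) ^ n * z ^ n‖
      = ‖(r:ℂ) ^ n - (-1) ^ n * z ^ n‖ := by
    rw [hD_eq, norm_mul, norm_mul, norm_neg, hne, hnz, RCLike.norm_conj]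
    ring
  have hD0 : (1 : ℂ) - (-1) ^ n * (r:ℂ) ^ n * z ^ n ≠ 0 := by
    intro h
    rw [h, norm_zero] at hDnorm
    exact hN0 (by rwa [eq_comm, norm_eq_zero] at hDnorm)
  have hNder : HasDerivAt (fun w : ℂ => (r:ℂ) ^ n - (-1) ^ n * w ^ n)
      (-((-1:ℂ) ^ n * ((n:ℂ) * z ^ (n - 1)))) z :=
    (((hasDerivAt_pow n z).const_mul ((-1:ℂ) ^ n)).const_sub ((r:ℂ) ^ n))
  have hDder : HasDerivAt (fun w : ℂ => (1:ℂ) - (-1) ^ n * (r:ℂ) ^ n * w ^ n)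
      (-((-1:ℂ) ^ n * (r:ℂ) ^ n * ((n:ℂ) * z ^ (n - 1)))) z :=
    (((hasDerivAt_pow n z).const_mul ((-1:ℂ) ^ n * (r:ℂ) ^ n)).const_sub 1)
  have hNum : HasDerivAt (fun w : ℂ => w * ((r:ℂ) ^ n - (-1) ^ n * w ^ n))
      (1 * ((r:ℂ) ^ n - (-1) ^ n * z ^ n)
        + z * (-((-1:ℂ) ^ n * ((n:ℂ) * z ^ (n - 1))))) z :=
    (hasDerivAt_id z).mul hNder
  have hf := hNum.div hDder hD0
  rw [show (fun w : ℂ => w * ((r:ℂ) ^ n - (-1) ^ n * w ^ n) / (1 - (-1) ^ n * (r:ℂ) ^ n * w ^ n))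
      = ((fun w : ℂ => w * ((r:ℂ) ^ n - (-1) ^ n * w ^ n)) /
        fun w => 1 - (-1) ^ n * (r:ℂ) ^ n * w ^ n) from rfl, hf.deriv]
  have hzn1 : z * z ^ (n - 1) = z ^ n := by
    conv_rhs => rw [← Nat.sub_add_cancel (Nat.one_le_iff_ne_zero.mpr hn)]
    rw [pow_succ]; ring
  have hNc : ((r:ℂ) ^ n - (-1) ^ n * z ^ n)
      * (starRingEnd ℂ) ((r:ℂ) ^ n - (-1) ^ n * z ^ n)
      = ((‖(r:ℂ) ^ n - (-1) ^ n * z ^ n‖ : ℝ) : ℂ) ^ 2 := by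
    rw [Complex.mul_conj, Complex.normSq_eq_norm_sq]
    push_cast; ring
  have key : (1 * ((r:ℂ) ^ n - (-1) ^ n * z ^ n)
        + z * -((-1:ℂ) ^ n * ((n:ℂ) * z ^ (n - 1)))) * (1 - (-1) ^ n * (r:ℂ) ^ n * z ^ n)
      - z * ((r:ℂ) ^ n - (-1) ^ n * z ^ n) * -((-1:ℂ) ^ n * (r:ℂ) ^ n * ((n:ℂ) * z ^ (n - 1)))
      = -((-1:ℂ) ^ n) * z ^ n * (((‖(r:ℂ) ^ n - (-1) ^ n * z ^ n‖ : ℝ) : ℂ) ^ 2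
          + (n:ℂ) * (1 - (r:ℂ) ^ (2 * n))) := by
    linear_combination ((-1:ℂ) ^ n * (n:ℂ)
        * ((r:ℂ) ^ n * ((r:ℂ) ^ n - (-1) ^ n * z ^ n)
          - (1 - (-1) ^ n * (r:ℂ) ^ n * z ^ n))) * hzn1
      + ((r:ℂ) ^ n - (-1) ^ n * z ^ n) * hD_eq
      + (-((-1:ℂ) ^ n) * z ^ n) * hNc
  rw [norm_div, norm_pow, hDnorm, key, norm_mul, norm_mul, norm_neg, hne, hnz]
  have hr2n : (0:ℝ) ≤ 1 - r ^ (2 * n) := by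
    have := pow_le_one₀ hr0 hr1.le (n := 2 * n)
    linarith
  have hcast : (((‖(r:ℂ) ^ n - (-1) ^ n * z ^ n‖ : ℝ) : ℂ)) ^ 2
      + (n:ℂ) * (1 - (r:ℂ) ^ (2 * n))
      = (((‖(r:ℂ) ^ n - (-1) ^ n * z ^ n‖ ^ 2 + n * (1 - r ^ (2 * n)) : ℝ)) : ℂ) := by
    push_cast; ring
  rw [hcast, Complex.norm_real, Real.norm_eq_abs, _root_.abs_of_nonneg (by positivity)]
  ring

set_option maxHeartbeats 2000000 in
/-- **Proposition 2.6.** For every `0 < δ < 1` and `0 < c < 1` there is a constant `C`,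
depending on `δ` and `c` but not on `n`, with `n/C < |𝓑'_{n,δ,c}(z)| < nC` for all `z` on
the unit circle and all `n ∈ ℕ`. -/
theorem blaschke_deriv_comparable
    (δ c : ℝ) (hδ0 : 0 < δ) (hδ1 : δ < 1) (hc0 : 0 < c) (hc1 : c < 1) :
    ∃ C : ℝ, 0 < C ∧ ∀ n : ℕ, 1 ≤ n → ∀ z : ℂ, ‖z‖ = 1 →
      (n : ℝ) / C < ‖deriv (blaschkeB n δ c) z‖ ∧
        ‖deriv (blaschkeB n δ c) z‖ < (n : ℝ) * C := by
  set t : ℝ := δ * (1 - c) with ht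
  have ht0 : 0 < t := mul_pos hδ0 (by linarith)
  have ht1 : t < 1 := by
    nlinarith
  set m : ℝ := 1 - Real.exp (-t) with hm
  have hm0 : 0 < m := by
    have : Real.exp (-t) < 1 := by
      rw [Real.exp_lt_one_iff]; linarith
    simp only [hm]; linarith
  have hm1 : m < 1 := by
    have : 0 < Real.exp (-t) := Real.exp_pos _
    simp only [hm]; linarith
  refine ⟨8 / m, by positivity, fun n hn z hz => ?_⟩
  have hn0 : n ≠ 0 := by omega
  have hnR : (1:ℝ) ≤ (n:ℝ) := by exact_mod_cast hn
  have hnRpos : (0:ℝ) < n := by linarith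
  set r : ℝ := 1 - δ * (1 - c) / n with hrdef
  have htn : t / n ≤ t := by
    rw [div_le_iff₀ hnRpos]; nlinarith
  have htn0 : 0 < t / n := div_pos ht0 hnRpos
  have hr0 : 0 < r := by simp only [hrdef, ← ht]; linarith
  have hr1 : r < 1 := by simp only [hrdef, ← ht]; linarith
  -- r^n ≤ exp (-t)
  have hrn_exp : r ^ n ≤ Real.exp (-t) := by
    have h1 : r ≤ Real.exp (-(t / n)) := by
      have := Real.add_one_le_exp (-(t / n))
      simp only [hrdef, ← ht]; linarith
    calc r ^ n ≤ Real.exp (-(t / n)) ^ n := pow_le_pow_left₀ hr0.le h1 n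
      _ = Real.exp (-t) := by
          rw [← Real.exp_nat_mul]
          congr 1
          field_simp
  have hrn1 : r ^ n < 1 := pow_lt_one₀ hr0.le hr1 hn0
  have hrn0 : 0 < r ^ n := pow_pos hr0 n
  have hs : m ≤ 1 - r ^ n := by simp only [hm]; linarith
  -- rewrite the derivative
  have hfun : blaschkeB n δ c = fun w : ℂ => w * ((r:ℂ) ^ n - (-1) ^ n * w ^ n) /
      (1 - (-1) ^ n * (r:ℂ) ^ n * w ^ n) := by
    funext w
    exact blaschkeB_closed n hn0 δ c w
  rw [hfun, deriv_closed_norm hn0 r hr0.le hr1 z hz]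
  -- bounds on ‖N‖
  set A : ℝ := ‖(r:ℂ) ^ n - (-1) ^ n * z ^ n‖ with hA
  have hne : ‖((-1:ℂ)) ^ n‖ = 1 := by
    rw [norm_pow, norm_neg, norm_one, one_pow]
  have hnz : ‖z ^ n‖ = 1 := by rw [norm_pow, hz, one_pow]
  have hrnormpow : ‖((r:ℂ)) ^ n‖ = r ^ n := by
    rw [← Complex.ofReal_pow, Complex.norm_real, Real.norm_eq_abs,
      _root_.abs_of_nonneg hrn0.le]
  have hAub : A ≤ 2 := by
    calc A ≤ ‖((r:ℂ)) ^ n‖ + ‖(-1:ℂ) ^ n * z ^ n‖ := norm_sub_le _ _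
      _ = r ^ n + 1 := by rw [norm_mul, hne, hnz, hrnormpow]; ring
      _ ≤ 2 := by linarith
  have hAlb : 1 - r ^ n ≤ A := by
    calc (1:ℝ) - r ^ n = ‖(-1:ℂ) ^ n * z ^ n‖ - ‖((r:ℂ)) ^ n‖ := by
          rw [norm_mul, hne, hnz, hrnormpow]; ring
      _ ≤ ‖(-1:ℂ) ^ n * z ^ n - (r:ℂ) ^ n‖ := norm_sub_norm_le _ _
      _ = A := norm_sub_rev _ _
  have hApos : 0 < A := lt_of_lt_of_le (by linarith) hAlb
  -- bounds on B := n * (1 - r^(2n))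
  have hr2n_le : r ^ (2 * n) ≤ r ^ n := pow_le_pow_of_le_one hr0.le hr1.le (by omega)
  have hr2n0 : 0 < r ^ (2 * n) := pow_pos hr0 _
  have hr2n_eq : r ^ (2 * n) = (r ^ n) ^ 2 := by rw [← pow_mul, mul_comm]
  set B : ℝ := (n : ℝ) * (1 - r ^ (2 * n)) with hB
  have hBlb : (n:ℝ) * m ≤ B := by
    have : m ≤ 1 - r ^ (2 * n) := by linarith
    simp only [hB]
    nlinarith
  have hBub : B ≤ 2 * n * (1 - r ^ n) := by
    simp only [hB, hr2n_eq]
    nlinarith [mul_nonneg hnRpos.le (sq_nonneg (1 - r ^ n))]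
  clear hfun hz hrn_exp hrdef hm ht hA hB
  clear_value t m r A B
  constructor
  · -- lower bound
    rw [div_div_eq_mul_div, div_lt_div_iff₀ (by norm_num) (pow_pos hApos 2)]
    have hA4 : A ^ 2 ≤ 4 := by nlinarith [hAub, hApos]
    have l1 : (n:ℝ) * m * A ^ 2 ≤ (n:ℝ) * m * 4 :=
      mul_le_mul_of_nonneg_left hA4 (mul_pos hnRpos hm0).le
    have l2 : (0:ℝ) < (n:ℝ) * m := mul_pos hnRpos hm0
    linarith [sq_nonneg A]
  · -- upper bound
    rw [div_lt_iff₀ (pow_pos hApos 2)]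
    have hsA : (1 - r ^ n) ^ 2 ≤ A ^ 2 := by nlinarith
    have hmA : m * (1 - r ^ n) ≤ A ^ 2 := by
      nlinarith [mul_nonneg (by linarith : (0:ℝ) ≤ 1 - r ^ n - m) (by linarith : (0:ℝ) ≤ 1 - r ^ n)]
    have h2 : m * B ≤ 2 * (n:ℝ) * A ^ 2 := by
      calc m * B ≤ m * (2 * n * (1 - r ^ n)) := mul_le_mul_of_nonneg_left hBub hm0.le
        _ = 2 * (n:ℝ) * (m * (1 - r ^ n)) := by ring
        _ ≤ 2 * (n:ℝ) * A ^ 2 := mul_le_mul_of_nonneg_left hmA (by positivity)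
    have h8 : (n:ℝ) * (8 / m) * A ^ 2 = 8 * (n:ℝ) * A ^ 2 / m := by ring
    rw [h8, lt_div_iff₀ hm0]
    have u1 : m * A ^ 2 ≤ 1 * A ^ 2 := mul_le_mul_of_nonneg_right hm1.le (sq_nonneg A)
    have u2 : 1 * A ^ 2 ≤ (n:ℝ) * A ^ 2 := mul_le_mul_of_nonneg_right hnR (sq_nonneg A)
    have u3 : (0:ℝ) < (n:ℝ) * A ^ 2 := mul_pos hnRpos (pow_pos hApos 2)
    nlinarith [h2, u1, u2, u3]
end

section
/- (Proposition 6.2) Suppose e ⊂ ℂ is a C¹ Jordan arc (the image of an injective C¹ map γ : [0,1] → ℂ with nonvanishing derivative) and φ₁, φ₂ are C¹ homeomorphisms of e onto their images (i.e. injective continuous maps on e, continuously differentiable along the arc) such that: (1) φ₁(e) = φ₂(e); (2) φ₁ and φ₂ agree at the two endpoints of e; and (3) |φ₁′(z)| = |φ₂′(z)| for all z ∈ e, where φᵢ′ denotes the derivative along the arc. Then φ₁ = φ₂ on e. -/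
open Complex Set MeasureTheory intervalIntegral

-- Step 1: FTC for C¹ on Icc
lemma ftc_aux {f : ℝ → ℂ} {a b : ℝ} (hf : ContDiffOn ℝ 1 f (Icc a b))
    {p q : ℝ} (hp : p ∈ Icc a b) (hq : q ∈ Icc a b) (hpq : p ≤ q) :
    ∫ t in p..q, derivWithin f (Icc a b) t = f q - f p := by
  have hg : ContinuousOn (derivWithin f (Icc a b)) (Icc a b) := by
    rcases eq_or_lt_of_le (hp.1.trans hp.2) with h | h
    · rw [← h, Icc_self]; exact continuousOn_singleton _ _
    · exact hf.continuousOn_derivWithin (uniqueDiffOn_Icc h) le_rfl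
  refine intervalIntegral.integral_eq_sub_of_hasDeriv_right_of_le hpq
    (hf.continuousOn.mono (Icc_subset_Icc hp.1 hq.2)) (fun t ht => ?_) ?_
  · have htab : t ∈ Ioo a b := Ioo_subset_Ioo hp.1 hq.2 ht
    have hd : HasDerivWithinAt f (derivWithin f (Icc a b) t) (Icc a b) t :=
      (hf.differentiableOn one_ne_zero t (Ioo_subset_Icc_self htab)).hasDerivWithinAt
    exact (hd.hasDerivAt (Icc_mem_nhds htab.1 htab.2)).hasDerivWithinAt
  · exact (hg.mono (Icc_subset_Icc hp.1 hq.2)).intervalIntegrable_of_Icc hpq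

-- continuity of the derivative
lemma deriv_cont {f : ℝ → ℂ} {a b : ℝ} (hf : ContDiffOn ℝ 1 f (Icc a b)) :
    ContinuousOn (derivWithin f (Icc a b)) (Icc a b) := by
  rcases le_or_gt b a with h | h
  · intro t ht
    have hs : Icc a b ⊆ {a} := by
      intro s hs; have := le_antisymm (hs.2.trans h) hs.1; simp [← this]
    exact (continuousOn_singleton _ a).mono hs t ht
  · exact hf.continuousOn_derivWithin (uniqueDiffOn_Icc h) le_rfl

-- continuity of speed
lemma speed_cont {f : ℝ → ℂ} {a b : ℝ} (hf : ContDiffOn ℝ 1 f (Icc a b)) :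
    ContinuousOn (fun t => ‖derivWithin f (Icc a b) t‖) (Icc a b) :=
  (deriv_cont hf).norm

-- direction ≤ : variation ≤ integral of speed
lemma evar_le_integral {f : ℝ → ℂ} {a b : ℝ} (hf : ContDiffOn ℝ 1 f (Icc a b))
    {x y : ℝ} (hx : x ∈ Icc a b) (hy : y ∈ Icc a b) (hxy : x ≤ y) :
    eVariationOn f (Icc x y) ≤
      ENNReal.ofReal (∫ t in x..y, ‖derivWithin f (Icc a b) t‖) := by
  set g := derivWithin f (Icc a b) with hgdef
  have hgc : ContinuousOn (fun t => ‖g t‖) (Icc a b) := speed_cont hf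
  have hsub : Icc x y ⊆ Icc a b := Icc_subset_Icc hx.1 hy.2
  apply iSup_le
  rintro ⟨n, u, hu, us⟩
  have hmem : ∀ i, u i ∈ Icc a b := fun i => hsub (us i)
  have hint : ∀ p q : ℝ, p ∈ Icc a b → q ∈ Icc a b → p ≤ q →
      IntervalIntegrable (fun t => ‖g t‖) volume p q := fun p q hp hq hpq =>
    (hgc.mono (Icc_subset_Icc hp.1 hq.2)).intervalIntegrable_of_Icc hpq
  calc ∑ i ∈ Finset.range n, edist (f (u (i + 1))) (f (u i))
      ≤ ∑ i ∈ Finset.range n, ENNReal.ofReal (∫ t in u i..u (i+1), ‖g t‖) := by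
        refine Finset.sum_le_sum fun i _ => ?_
        rw [edist_dist, dist_eq_norm]
        apply ENNReal.ofReal_le_ofReal
        rw [← ftc_aux hf (hmem i) (hmem (i+1)) (hu (Nat.le_succ i))]
        exact intervalIntegral.norm_integral_le_integral_norm (hu (Nat.le_succ i))
    _ = ENNReal.ofReal (∑ i ∈ Finset.range n, ∫ t in u i..u (i+1), ‖g t‖) := by
        rw [ENNReal.ofReal_sum_of_nonneg]
        intro i _
        exact intervalIntegral.integral_nonneg (hu (Nat.le_succ i)) (fun t _ => norm_nonneg _)
    _ = ENNReal.ofReal (∫ t in (u 0)..(u n), ‖g t‖) := by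
        rw [intervalIntegral.sum_integral_adjacent_intervals]
        intro k _
        exact hint _ _ (hmem k) (hmem (k+1)) (hu (Nat.le_succ k))
    _ ≤ ENNReal.ofReal (∫ t in x..y, ‖g t‖) := by
        apply ENNReal.ofReal_le_ofReal
        apply intervalIntegral.integral_mono_interval (us 0).1 (hu (Nat.zero_le n)) (us n).2
        · filter_upwards [] with t using norm_nonneg _
        · exact hint _ _ hx hy hxy

lemma integral_le_evar {f : ℝ → ℂ} {a b : ℝ} (hf : ContDiffOn ℝ 1 f (Icc a b))
    {x y : ℝ} (hx : x ∈ Icc a b) (hy : y ∈ Icc a b) (hxy : x ≤ y) :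
    ENNReal.ofReal (∫ t in x..y, ‖derivWithin f (Icc a b) t‖) ≤ eVariationOn f (Icc x y) := by
  set g := derivWithin f (Icc a b) with hgdef
  rcases eq_or_lt_of_le hxy with rfl | hlt
  · simp
  have hyx : 0 < y - x := sub_pos.mpr hlt
  have hgc : ContinuousOn (fun t => ‖g t‖) (Icc a b) := speed_cont hf
  have hsub : Icc x y ⊆ Icc a b := Icc_subset_Icc hx.1 hy.2
  have hVfin : eVariationOn f (Icc x y) ≠ ⊤ :=
    ne_top_of_le_ne_top ENNReal.ofReal_ne_top (evar_le_integral hf hx hy hxy)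
  set V := (eVariationOn f (Icc x y)).toReal with hVdef
  -- reduce to a real inequality
  suffices h : (∫ t in x..y, ‖g t‖) ≤ V by
    calc ENNReal.ofReal (∫ t in x..y, ‖g t‖) ≤ ENNReal.ofReal V := ENNReal.ofReal_le_ofReal h
    _ = eVariationOn f (Icc x y) := ENNReal.ofReal_toReal hVfin
  apply le_of_forall_pos_le_add
  intro ε hε
  set ε' := ε / (2 * (y - x)) with hε'def
  have hε' : 0 < ε' := div_pos hε (by linarith)
  -- uniform continuity of the derivative
  have hgu : UniformContinuousOn g (Icc a b) :=
    isCompact_Icc.uniformContinuousOn_of_continuous (deriv_cont hf)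
  obtain ⟨δ, hδpos, hδ⟩ := Metric.uniformContinuousOn_iff.mp hgu ε' hε'
  -- choose a fine uniform partition
  obtain ⟨n, hn⟩ := exists_nat_gt ((y - x) / δ)
  have hnpos : 0 < (n : ℝ) := lt_trans (div_pos hyx hδpos) hn
  have hn0 : n ≠ 0 := by exact_mod_cast hnpos.ne'
  set Δ := (y - x) / n with hΔdef
  have hΔpos : 0 < Δ := div_pos hyx hnpos
  have hΔδ : Δ < δ := by
    rw [hΔdef, div_lt_iff₀ hnpos]
    have h1 : (y - x) / δ * δ < (n : ℝ) * δ := mul_lt_mul_of_pos_right hn hδpos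
    rw [div_mul_cancel₀ _ hδpos.ne'] at h1
    linarith
  set u : ℕ → ℝ := fun i => x + (min i n : ℕ) * Δ with hudef
  have hu0 : u 0 = x := by simp [hudef]
  have hun : u n = y := by
    show x + (min n n : ℕ) * Δ = y
    rw [min_self, hΔdef]
    field_simp
    ring
  have hu : Monotone u := by
    intro i j hij
    show x + (min i n : ℕ) * Δ ≤ x + (min j n : ℕ) * Δ
    have h2 : ((min i n : ℕ) : ℝ) ≤ ((min j n : ℕ) : ℝ) := by
      exact_mod_cast min_le_min_right n hij
    nlinarith [hΔpos]
  have humem : ∀ i, u i ∈ Icc x y := by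
    intro i
    constructor
    · show x ≤ x + (min i n : ℕ) * Δ
      have : (0:ℝ) ≤ (min i n : ℕ) * Δ := by positivity
      linarith
    · calc u i ≤ u (max i n) := hu (le_max_left i n)
        _ ≤ u n := by
            show x + (min (max i n) n : ℕ) * Δ ≤ x + (min n n : ℕ) * Δ
            have : min (max i n) n = n := min_eq_right (le_max_right i n)
            rw [this, min_self]
        _ = y := hun
  have hustep : ∀ i < n, u (i + 1) = u i + Δ := by
    intro i hi
    show x + (min (i+1) n : ℕ) * Δ = x + (min i n : ℕ) * Δ + Δ
    rw [min_eq_left hi.le, min_eq_left (Nat.succ_le_of_lt hi)]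
    push_cast; ring
  -- integrability
  have hint : ∀ p q : ℝ, p ∈ Icc a b → q ∈ Icc a b → p ≤ q →
      IntervalIntegrable (fun t => ‖g t‖) volume p q := fun p q hp hq hpq =>
    (hgc.mono (Icc_subset_Icc hp.1 hq.2)).intervalIntegrable_of_Icc hpq
  have humem' : ∀ i, u i ∈ Icc a b := fun i => hsub (humem i)
  -- per-interval estimate
  have key : ∀ i < n, (∫ t in u i..u (i+1), ‖g t‖) ≤ ‖f (u (i+1)) - f (u i)‖ + 2 * ε' * Δ := by
    intro i hi
    set p := u i
    set q := u (i + 1)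
    have hpq : q = p + Δ := hustep i hi
    have hple : p ≤ q := by rw [hpq]; linarith
    have hpmem : p ∈ Icc a b := humem' i
    have hqmem : q ∈ Icc a b := humem' (i+1)
    have hIcc : Icc p q ⊆ Icc a b := Icc_subset_Icc hpmem.1 hqmem.2
    have hbound : ∀ t ∈ Icc p q, ‖g t - g p‖ ≤ ε' := by
      intro t ht
      have htmem : t ∈ Icc a b := hIcc ht
      have hdist : dist t p < δ := by
        rw [Real.dist_eq, _root_.abs_of_nonneg (by linarith [ht.1])]
        have : t ≤ q := ht.2
        rw [hpq] at this
        linarith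
      have := hδ t htmem p hpmem hdist
      rw [dist_eq_norm] at this
      exact this.le
    -- upper bound for the integral of the speed
    have hA : (∫ t in p..q, ‖g t‖) ≤ (q - p) * (‖g p‖ + ε') := by
      have h1 : (∫ t in p..q, ‖g t‖) ≤ ∫ _t in p..q, (‖g p‖ + ε') := by
        apply intervalIntegral.integral_mono_on hple
          (hint p q hpmem hqmem hple) intervalIntegrable_const
        intro t ht
        have h2 := hbound t ht
        have h3 := norm_sub_norm_le (g t) (g p)
        linarith
      rw [intervalIntegral.integral_const, smul_eq_mul] at h1
      exact h1
    -- lower bound for the displacement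
    have hftc : ∫ t in p..q, g t = f q - f p := ftc_aux hf hpmem hqmem hple
    have hgint : IntervalIntegrable g volume p q :=
      ((deriv_cont hf).mono hIcc).intervalIntegrable_of_Icc hple
    have hrint : (∫ t in p..q, (g t - g p)) = (f q - f p) - (q - p) • g p := by
      rw [intervalIntegral.integral_sub hgint intervalIntegrable_const,
        intervalIntegral.integral_const, hftc]
    have hr : ‖∫ t in p..q, (g t - g p)‖ ≤ ε' * |q - p| := by
      apply intervalIntegral.norm_integral_le_of_norm_le_const
      intro t ht
      rw [uIoc_of_le hple] at ht
      exact hbound t (Ioc_subset_Icc_self ht)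
    have hB : (q - p) * ‖g p‖ - ε' * (q - p) ≤ ‖f q - f p‖ := by
      have h1 : ‖(q - p) • g p‖ = (q - p) * ‖g p‖ := by
        rw [norm_smul, Real.norm_eq_abs, _root_.abs_of_nonneg (by linarith)]
      have h2 : ‖(q - p) • g p‖ ≤ ‖f q - f p‖ + ‖(f q - f p) - (q - p) • g p‖ := by
        have := norm_sub_le (f q - f p) ((f q - f p) - (q - p) • g p)
        have h3 : (f q - f p) - ((f q - f p) - (q - p) • g p) = (q - p) • g p := by ring
        rw [h3] at this
        linarith [this]
      rw [← hrint] at h2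
      rw [_root_.abs_of_nonneg (by linarith : (0:ℝ) ≤ q - p)] at hr
      linarith
    have hqp : q - p = Δ := by rw [hpq]; ring
    rw [hqp] at hA hB
    linarith
  -- sum up
  have husum : (∫ t in x..y, ‖g t‖) = ∑ i ∈ Finset.range n, ∫ t in u i..u (i+1), ‖g t‖ := by
    rw [intervalIntegral.sum_integral_adjacent_intervals
      (fun k _ => hint _ _ (humem' k) (humem' (k+1)) (hu (Nat.le_succ k))), hu0, hun]
  have hsum2 : ∑ i ∈ Finset.range n, (∫ t in u i..u (i+1), ‖g t‖) ≤
      (∑ i ∈ Finset.range n, ‖f (u (i+1)) - f (u i)‖) + n * (2 * ε' * Δ) := by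
    calc ∑ i ∈ Finset.range n, (∫ t in u i..u (i+1), ‖g t‖)
        ≤ ∑ i ∈ Finset.range n, (‖f (u (i+1)) - f (u i)‖ + 2 * ε' * Δ) :=
          Finset.sum_le_sum (fun i hi => key i (Finset.mem_range.mp hi))
      _ = (∑ i ∈ Finset.range n, ‖f (u (i+1)) - f (u i)‖) + n * (2 * ε' * Δ) := by
          rw [Finset.sum_add_distrib, Finset.sum_const, Finset.card_range, nsmul_eq_mul]
  have hnΔ : (n : ℝ) * (2 * ε' * Δ) = ε := by
    rw [hΔdef, hε'def]
    field_simp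
  have hvar : (∑ i ∈ Finset.range n, ‖f (u (i+1)) - f (u i)‖) ≤ V := by
    have hle := eVariationOn.sum_le (f := f) (n := n) hu humem
    have heq : ENNReal.ofReal (∑ i ∈ Finset.range n, ‖f (u (i+1)) - f (u i)‖) =
        ∑ i ∈ Finset.range n, edist (f (u (i+1))) (f (u i)) := by
      rw [ENNReal.ofReal_sum_of_nonneg (fun i _ => norm_nonneg _)]
      exact Finset.sum_congr rfl (fun i _ => by rw [edist_dist, dist_eq_norm])
    calc (∑ i ∈ Finset.range n, ‖f (u (i+1)) - f (u i)‖)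
        = (ENNReal.ofReal (∑ i ∈ Finset.range n, ‖f (u (i+1)) - f (u i)‖)).toReal :=
          (ENNReal.toReal_ofReal (Finset.sum_nonneg (fun i _ => norm_nonneg _))).symm
      _ ≤ V := ENNReal.toReal_mono hVfin (heq ▸ hle)
  linarith

lemma evar_eq_integral {f : ℝ → ℂ} {a b : ℝ} (hf : ContDiffOn ℝ 1 f (Icc a b))
    {x y : ℝ} (hx : x ∈ Icc a b) (hy : y ∈ Icc a b) (hxy : x ≤ y) :
    eVariationOn f (Icc x y) =
      ENNReal.ofReal (∫ t in x..y, ‖derivWithin f (Icc a b) t‖) :=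
  le_antisymm (evar_le_integral hf hx hy hxy) (integral_le_evar hf hx hy hxy)


/-- **Proposition 6.2.** Let `e` be a C¹ Jordan arc, parameterized by an injective C¹ map
`γ : [0,1] → ℂ` with nonvanishing derivative, and let `φ₁, φ₂` be C¹ homeomorphisms of `e`
onto their images such that `φ₁(e) = φ₂(e)`, `φ₁` and `φ₂` agree at the two endpoints of `e`,
and the moduli of their derivatives along the arc coincide at every point of `e`. Then
`φ₁ = φ₂` on `e`. (The derivative of `φ` along the arc at `γ(t)` is `(φ∘γ)'(t)/γ'(t)`.) -/
theorem c1_arc_rigidity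
    (γ : ℝ → ℂ) (hγ : ContDiffOn ℝ 1 γ (Set.Icc 0 1))
    (hγinj : Set.InjOn γ (Set.Icc 0 1))
    (hγ' : ∀ t ∈ Set.Icc (0 : ℝ) 1, derivWithin γ (Set.Icc 0 1) t ≠ 0)
    (e : Set ℂ) (he : e = γ '' Set.Icc 0 1)
    (φ₁ φ₂ : ℂ → ℂ)
    (hφ₁c : ContinuousOn φ₁ e) (hφ₂c : ContinuousOn φ₂ e)
    (hφ₁inj : Set.InjOn φ₁ e) (hφ₂inj : Set.InjOn φ₂ e)
    (hφ₁d : ContDiffOn ℝ 1 (φ₁ ∘ γ) (Set.Icc 0 1))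
    (hφ₂d : ContDiffOn ℝ 1 (φ₂ ∘ γ) (Set.Icc 0 1))
    (him : φ₁ '' e = φ₂ '' e)
    (hend₀ : φ₁ (γ 0) = φ₂ (γ 0)) (hend₁ : φ₁ (γ 1) = φ₂ (γ 1))
    (hda : ∀ t ∈ Set.Icc (0 : ℝ) 1,
      ‖derivWithin (φ₁ ∘ γ) (Set.Icc 0 1) t / derivWithin γ (Set.Icc 0 1) t‖ =
        ‖derivWithin (φ₂ ∘ γ) (Set.Icc 0 1) t / derivWithin γ (Set.Icc 0 1) t‖) :
    Set.EqOn φ₁ φ₂ e := by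
  have h01 : (0:ℝ) ∈ Icc (0:ℝ) 1 := by norm_num
  have h11 : (1:ℝ) ∈ Icc (0:ℝ) 1 := by norm_num
  have hγc : ContinuousOn γ (Icc 0 1) := hγ.continuousOn
  have hγm : MapsTo γ (Icc 0 1) e := by rw [he]; exact mapsTo_image γ _
  have hc₁c : ContinuousOn (φ₁ ∘ γ) (Icc 0 1) := hφ₁c.comp hγc hγm
  have hc₂c : ContinuousOn (φ₂ ∘ γ) (Icc 0 1) := hφ₂c.comp hγc hγm
  have hc₁inj : InjOn (φ₁ ∘ γ) (Icc 0 1) := hφ₁inj.comp hγinj hγm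
  have hc₂inj : InjOn (φ₂ ∘ γ) (Icc 0 1) := hφ₂inj.comp hγinj hγm
  have himc : (φ₁ ∘ γ) '' (Icc 0 1) = (φ₂ ∘ γ) '' (Icc 0 1) := by
    rw [image_comp, image_comp, ← he, him]
  -- equality of speeds
  have hnorm : ∀ s ∈ Icc (0:ℝ) 1,
      ‖derivWithin (φ₁ ∘ γ) (Icc 0 1) s‖ = ‖derivWithin (φ₂ ∘ γ) (Icc 0 1) s‖ := by
    intro s hs
    have hd := hda s hs
    rw [norm_div, norm_div] at hd
    have h0 : ‖derivWithin γ (Icc 0 1) s‖ ≠ 0 := norm_ne_zero_iff.mpr (hγ' s hs)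
    exact mul_right_cancel₀ h0 ((div_eq_div_iff h0 h0).mp hd)
  -- the inverse of c₂ exists and is continuous, by compactness
  haveI : CompactSpace (Icc (0:ℝ) 1) := isCompact_iff_compactSpace.mp isCompact_Icc
  set F : Icc (0:ℝ) 1 → ℂ := (Icc (0:ℝ) 1).restrict (φ₂ ∘ γ) with hFdef
  have hFc : Continuous F := continuousOn_iff_continuous_restrict.mp hc₂c
  have hFinj : Function.Injective F := fun s t hst => Subtype.ext (hc₂inj s.2 t.2 hst)
  have hrangeF : Set.range F = (φ₂ ∘ γ) '' (Icc 0 1) := Set.range_restrict _ _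
  have hmemF : ∀ t ∈ Icc (0:ℝ) 1, (φ₁ ∘ γ) t ∈ Set.range F := by
    intro t ht
    rw [hrangeF, ← himc]
    exact mem_image_of_mem _ ht
  set E : Icc (0:ℝ) 1 ≃ Set.range F := Equiv.ofInjective F hFinj with hEdef
  have hEc : Continuous (E : Icc (0:ℝ) 1 → Set.range F) := hFc.subtype_mk _
  set H : Icc (0:ℝ) 1 ≃ₜ Set.range F := Continuous.homeoOfEquivCompactToT2 (f := E) hEc
    with hHdef
  set h : ℝ → ℝ := fun t => if ht : t ∈ Icc (0:ℝ) 1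
    then (H.symm ⟨(φ₁ ∘ γ) t, hmemF t ht⟩ : ℝ) else 0 with hhdef
  have hhmem : ∀ t ∈ Icc (0:ℝ) 1, h t ∈ Icc (0:ℝ) 1 := by
    intro t ht
    rw [hhdef]; dsimp only; rw [dif_pos ht]
    exact (H.symm ⟨(φ₁ ∘ γ) t, hmemF t ht⟩).2
  have hch : ∀ t ∈ Icc (0:ℝ) 1, (φ₂ ∘ γ) (h t) = (φ₁ ∘ γ) t := by
    intro t ht
    rw [hhdef]; dsimp only; rw [dif_pos ht]
    have h1 := H.apply_symm_apply ⟨(φ₁ ∘ γ) t, hmemF t ht⟩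
    have h2 : (H (H.symm ⟨(φ₁ ∘ γ) t, hmemF t ht⟩) : ℂ) = F (H.symm ⟨(φ₁ ∘ γ) t, hmemF t ht⟩) :=
      rfl
    rw [h1] at h2
    exact h2.symm
  -- continuity of h
  have hhc : ContinuousOn h (Icc (0:ℝ) 1) := by
    rw [continuousOn_iff_continuous_restrict]
    have heq : (Icc (0:ℝ) 1).restrict h =
        fun k : Icc (0:ℝ) 1 => (H.symm ⟨(φ₁ ∘ γ) ↑k, hmemF ↑k k.2⟩ : ℝ) := by
      funext k
      show h ↑k = _
      rw [hhdef]; dsimp only; rw [dif_pos k.2]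
    change Continuous ((Icc (0:ℝ) 1).restrict h)
    rw [heq]
    apply continuous_subtype_val.comp
    apply H.symm.continuous.comp
    exact (continuousOn_iff_continuous_restrict.mp hc₁c).subtype_mk _
  -- injectivity of h
  have hhinj : InjOn h (Icc (0:ℝ) 1) := by
    intro s hs t ht hst
    apply hc₁inj hs ht
    rw [← hch s hs, ← hch t ht, hst]
  -- endpoints
  have hh0 : h 0 = 0 := by
    apply hc₂inj (hhmem 0 h01) h01
    rw [hch 0 h01]
    exact hend₀
  have hh1 : h 1 = 1 := by
    apply hc₂inj (hhmem 1 h11) h11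
    rw [hch 1 h11]
    exact hend₁
  -- strict monotonicity
  have hhmono : StrictMonoOn h (Icc (0:ℝ) 1) := by
    apply ContinuousOn.strictMonoOn_of_injOn_Icc zero_le_one _ hhc hhinj
    rw [hh0, hh1]; exact zero_le_one
  -- surjectivity of h onto [0,1]
  have hhsurj : ∀ s ∈ Icc (0:ℝ) 1, ∃ t ∈ Icc (0:ℝ) 1, h t = s := by
    intro s hs
    have : (φ₂ ∘ γ) s ∈ (φ₁ ∘ γ) '' (Icc 0 1) := by
      rw [himc]; exact mem_image_of_mem _ hs
    obtain ⟨t, ht, hts⟩ := this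
    refine ⟨t, ht, hc₂inj (hhmem t ht) hs ?_⟩
    rw [hch t ht, hts]
  -- image of initial segments
  have himg : ∀ t ∈ Icc (0:ℝ) 1, h '' Icc 0 t = Icc 0 (h t) := by
    intro t ht
    apply Subset.antisymm
    · rintro _ ⟨s, hs, rfl⟩
      have hsI : s ∈ Icc (0:ℝ) 1 := ⟨hs.1, hs.2.trans ht.2⟩
      constructor
      · rw [← hh0]
        exact hhmono.monotoneOn h01 hsI hs.1
      · exact hhmono.monotoneOn hsI ht hs.2
    · rintro v ⟨hv0, hvt⟩
      have hvI : v ∈ Icc (0:ℝ) 1 := ⟨hv0, hvt.trans (hhmem t ht).2⟩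
      obtain ⟨u, hu, huv⟩ := hhsurj v hvI
      refine ⟨u, ⟨hu.1, ?_⟩, huv⟩
      by_contra hut
      push_neg at hut
      have := hhmono ht hu hut
      rw [huv] at this
      exact absurd hvt (not_le.mpr this)
  -- key: from equal arclength integrals, points coincide
  have hg₂c : ContinuousOn (fun s => ‖derivWithin (φ₂ ∘ γ) (Icc 0 1) s‖) (Icc (0:ℝ) 1) :=
    speed_cont hφ₂d
  have hint₂ : ∀ p q : ℝ, p ∈ Icc (0:ℝ) 1 → q ∈ Icc (0:ℝ) 1 → p ≤ q →
      IntervalIntegrable (fun s => ‖derivWithin (φ₂ ∘ γ) (Icc 0 1) s‖) volume p q :=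
    fun p q hp hq hpq =>
      (hg₂c.mono (Icc_subset_Icc hp.1 hq.2)).intervalIntegrable_of_Icc hpq
  have habs : ∀ p ∈ Icc (0:ℝ) 1, ∀ q ∈ Icc (0:ℝ) 1, p ≤ q →
      (∫ s in (0:ℝ)..p, ‖derivWithin (φ₂ ∘ γ) (Icc 0 1) s‖) =
        (∫ s in (0:ℝ)..q, ‖derivWithin (φ₂ ∘ γ) (Icc 0 1) s‖) → p = q := by
    intro p hp q hq hpq heq
    have hadd : (∫ s in (0:ℝ)..p, ‖derivWithin (φ₂ ∘ γ) (Icc 0 1) s‖) +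
        (∫ s in p..q, ‖derivWithin (φ₂ ∘ γ) (Icc 0 1) s‖) =
        (∫ s in (0:ℝ)..q, ‖derivWithin (φ₂ ∘ γ) (Icc 0 1) s‖) :=
      intervalIntegral.integral_add_adjacent_intervals
        (hint₂ 0 p h01 hp hp.1) (hint₂ p q hp hq hpq)
    have hzero : (∫ s in p..q, ‖derivWithin (φ₂ ∘ γ) (Icc 0 1) s‖) = 0 := by linarith
    have hvar : eVariationOn (φ₂ ∘ γ) (Icc p q) = 0 := by
      apply le_antisymm _ zero_le
      calc eVariationOn (φ₂ ∘ γ) (Icc p q)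
          ≤ ENNReal.ofReal (∫ s in p..q, ‖derivWithin (φ₂ ∘ γ) (Icc 0 1) s‖) :=
            evar_le_integral hφ₂d hp hq hpq
        _ = 0 := by rw [hzero, ENNReal.ofReal_zero]
    have hedist : edist ((φ₂ ∘ γ) p) ((φ₂ ∘ γ) q) = 0 := by
      apply le_antisymm _ zero_le
      rw [← hvar]
      exact eVariationOn.edist_le _ (left_mem_Icc.mpr hpq) (right_mem_Icc.mpr hpq)
    exact hc₂inj hp hq (edist_eq_zero.mp hedist)
  -- identify h with the identity
  have hht : ∀ t ∈ Icc (0:ℝ) 1, h t = t := by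
    intro t ht
    -- variation of c₂ on [0, h t] = variation of c₁ on [0, t]
    have hvareq : eVariationOn (φ₂ ∘ γ) (Icc 0 (h t)) = eVariationOn (φ₁ ∘ γ) (Icc 0 t) := by
      rw [← himg t ht,
        ← eVariationOn.comp_eq_of_monotoneOn (φ₂ ∘ γ) h
          (hhmono.monotoneOn.mono (Icc_subset_Icc le_rfl ht.2))]
      apply eVariationOn.eq_of_eqOn
      intro s hs
      exact hch s ⟨hs.1, hs.2.trans ht.2⟩
    have hint_eq : (∫ s in (0:ℝ)..t, ‖derivWithin (φ₁ ∘ γ) (Icc 0 1) s‖) =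
        (∫ s in (0:ℝ)..t, ‖derivWithin (φ₂ ∘ γ) (Icc 0 1) s‖) := by
      apply intervalIntegral.integral_congr
      intro s hs
      rw [uIcc_of_le ht.1] at hs
      exact hnorm s ⟨hs.1, hs.2.trans ht.2⟩
    rw [evar_eq_integral hφ₂d h01 (hhmem t ht) (hhmem t ht).1,
      evar_eq_integral hφ₁d h01 ht ht.1, hint_eq] at hvareq
    have hIeq : (∫ s in (0:ℝ)..(h t), ‖derivWithin (φ₂ ∘ γ) (Icc 0 1) s‖) =
        (∫ s in (0:ℝ)..t, ‖derivWithin (φ₂ ∘ γ) (Icc 0 1) s‖) := by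
      have h1 : (0:ℝ) ≤ ∫ s in (0:ℝ)..(h t), ‖derivWithin (φ₂ ∘ γ) (Icc 0 1) s‖ :=
        intervalIntegral.integral_nonneg (hhmem t ht).1 (fun s _ => norm_nonneg _)
      exact (ENNReal.ofReal_eq_ofReal_iff h1
        (intervalIntegral.integral_nonneg ht.1 (fun s _ => norm_nonneg _))).mp hvareq
    rcases le_total (h t) t with hle | hle
    · exact habs (h t) (hhmem t ht) t ht hle hIeq
    · exact (habs t ht (h t) (hhmem t ht) hle hIeq.symm).symm
  -- conclude
  intro z hz
  rw [he] at hz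
  obtain ⟨t, ht, rfl⟩ := hz
  have := hch t ht
  rw [hht t ht] at this
  exact this.symm
end

section
/- (Edge-diameter lemma, content of Proposition 4.8 for boundary edges) Let D be an analytic domain, M < ∞, and let (B_n)_{n≥1} be a sequence of proper holomorphic maps B_n : D → 𝔻, each extending holomorphically across ∂D, such that n/M ≤ |B_n′(z)| ≤ nM for all z ∈ ∂D and all n ∈ ℕ. For each n let 𝒱_n := {z ∈ ∂D : B_n(z) ∈ ℝ} (equivalently, the preimage under the boundary extension of B_n of {−1, 1} ⊂ 𝕋). Then max{ diam(e) : e a connected component of ∂D ∖ 𝒱_n } → 0 as n → ∞. -/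
open Complex Metric Set Bornology

/-- An analytic Jordan curve: the image of the unit circle under a map which is holomorphic
and injective on an open neighborhood of the circle. -/
def IsAnalyticJordanCurve (Γ : Set ℂ) : Prop :=
  ∃ (U : Set ℂ) (γ : ℂ → ℂ), IsOpen U ∧ Metric.sphere (0 : ℂ) 1 ⊆ U ∧
    DifferentiableOn ℂ γ U ∧ Set.InjOn γ U ∧ Γ = γ '' Metric.sphere (0 : ℂ) 1

/-- An analytic domain: a (nonempty, open, connected) finitely connected domain whose boundary
is a finite disjoint union of analytic Jordan curves (Definition 2.1). -/
def IsAnalyticDomain (D : Set ℂ) : Prop :=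
  IsOpen D ∧ IsConnected D ∧
    ∃ (n : ℕ) (Γ : Fin n → Set ℂ),
      (∀ i, IsAnalyticJordanCurve (Γ i)) ∧
      ((Set.univ : Set (Fin n)).Pairwise fun i j => Disjoint (Γ i) (Γ j)) ∧
      frontier D = ⋃ i, Γ i

/-- A proper holomorphic map of a domain `D` into the unit disc: `B(D) ⊆ 𝔻` and preimages of
compact subsets of `𝔻` are compact subsets of `D` (Definition 2.2). -/
def IsProperHoloToDisc (B : ℂ → ℂ) (D : Set ℂ) : Prop :=
  DifferentiableOn ℂ B D ∧ Set.MapsTo B D (Metric.ball 0 1) ∧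
    ∀ L : Set ℂ, L ⊆ Metric.ball 0 1 → IsCompact L → IsCompact {z ∈ D | B z ∈ L}

/-- The vertex set `𝒱ₙ = {z ∈ ∂D : Bₙ(z) ∈ ℝ}` of Definition 3.5. -/
def vertexSet (B : ℂ → ℂ) (D : Set ℂ) : Set ℂ :=
  {z ∈ frontier D | (B z).im = 0}

section EdgeDiamAux
open Filter

private lemma ee_hasDerivAt (t : ℝ) :
    HasDerivAt (fun s : ℝ => Complex.exp (s * Complex.I))
      (Complex.exp (t * Complex.I) * Complex.I) t := by
  have h1 : HasDerivAt (fun ζ : ℂ => ζ * Complex.I) Complex.I (t : ℂ) :=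
    hasDerivAt_mul_const _
  have h2 := (Complex.hasDerivAt_exp ((t : ℂ) * Complex.I)).comp (t : ℂ) h1
  exact h2.comp_ofReal

theorem deriv_ne_zero_of_injOn {U : Set ℂ} {γ : ℂ → ℂ} (hU : IsOpen U)
    (hγ : DifferentiableOn ℂ γ U) (hinj : Set.InjOn γ U) {w : ℂ} (hw : w ∈ U) :
    deriv γ w ≠ 0 := by
  intro h0
  have hγa : AnalyticAt ℂ γ w := (hγ.analyticOnNhd hU) w hw
  have hga : AnalyticAt ℂ (fun z => γ z - γ w) w := hγa.sub analyticAt_const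
  have hnev : ¬ ∀ᶠ z in nhds w, γ z - γ w = 0 := by
    intro hev
    have h1 : ∀ᶠ z in nhdsWithin w {w}ᶜ, (γ z - γ w = 0 ∧ z ∈ U) ∧ z ∈ ({w}ᶜ : Set ℂ) :=
      (((hev.and (hU.eventually_mem hw)).filter_mono nhdsWithin_le_nhds).and
        eventually_mem_nhdsWithin)
    obtain ⟨z, ⟨hz0, hzU⟩, hzw⟩ := h1.exists
    exact hzw (Set.mem_singleton_iff.mpr (hinj hzU hw (sub_eq_zero.mp hz0)))
  have hord : analyticOrderAt (fun z => γ z - γ w) w ≠ ⊤ := by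
    rw [Ne, analyticOrderAt_eq_top]; exact hnev
  lift analyticOrderAt (fun z => γ z - γ w) w to ℕ using hord with n hn
  obtain ⟨hf, hh_an, hh0, hev⟩ := (hga.analyticOrderAt_eq_natCast (n := n)).1 hn.symm
  have hev' : ∀ᶠ z in nhds w, γ z - γ w = (z - w) ^ n * hf z := by
    filter_upwards [hev] with z hz using by simpa [smul_eq_mul] using hz
  -- n ≠ 0
  have hn0 : n ≠ 0 := by
    intro h
    apply hh0
    have := hev'.self_of_nhds
    simpa [h] using this.symm
  -- n ≠ 1
  have hn1 : n ≠ 1 := by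
    intro h
    subst h
    have hd2 : HasDerivAt (fun z => (z - w) ^ 1 * hf z)
        (1 * hf w + (w - w) ^ 1 * deriv hf w) w := by
      have h1 : HasDerivAt (fun z : ℂ => (z - w) ^ 1) 1 w := by
        simpa using ((hasDerivAt_id w).sub_const w)
      exact h1.mul hh_an.differentiableAt.hasDerivAt
    have hdg : deriv (fun z => γ z - γ w) w = deriv (fun z => (z - w) ^ 1 * hf z) w :=
      Filter.EventuallyEq.deriv_eq hev'
    have h3 : deriv (fun z => γ z - γ w) w = deriv γ w := by
      simp [deriv_sub_const]
    rw [h3, h0] at hdg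
    apply hh0
    have := hd2.deriv
    rw [← hdg] at this
    simpa using this.symm
  have hn2 : 2 ≤ n := by omega
  have hnC : (n : ℂ) ≠ 0 := by exact_mod_cast hn0
  -- construct local n-th root
  set c : ℂ := Complex.exp (Complex.log (hf w) / n) with hc_def
  have hc : c ≠ 0 := Complex.exp_ne_zero _
  set φ : ℂ → ℂ := fun z => Complex.exp (Complex.log (hf z / hf w) / n) * c with hφ_def
  have hφw : φ w = c := by
    simp [hφ_def, div_self hh0]
  -- strict derivative of φ at w
  have hφs : ∃ d : ℂ, HasStrictDerivAt φ d w := by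
    obtain ⟨p, hp⟩ := hh_an
    have hhs : HasStrictDerivAt hf ((p 1) fun _ => 1) w := hp.hasStrictDerivAt
    have hq : HasStrictDerivAt (fun z => hf z / hf w) (((p 1) fun _ => 1) / hf w) w :=
      hhs.div_const _
    have hmem : hf w / hf w ∈ Complex.slitPlane := by
      rw [div_self hh0]; exact Complex.one_mem_slitPlane
    have hlog := (Complex.hasStrictDerivAt_log hmem).comp w hq
    have hdiv := hlog.div_const (n : ℂ)
    have hexp := (Complex.hasStrictDerivAt_exp _).comp w hdiv
    exact ⟨_, hexp.mul_const c⟩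
  obtain ⟨d, hφs⟩ := hφs
  set F : ℂ → ℂ := fun z => (z - w) * φ z with hF_def
  have hF : HasStrictDerivAt F c w := by
    have h1 := HasStrictDerivAt.mul ((hasStrictDerivAt_id w).sub_const w) hφs
    have h2 : HasStrictDerivAt (fun y => (y - w) * φ y) c w := by
      exact h1.congr_deriv (by simp [hφw])
    exact h2
  have hFw : F w = 0 := by simp [hF_def]
  have hmap : Filter.map F (nhds w) = nhds 0 := by
    have := hF.map_nhds_eq hc
    rwa [hFw] at this
  -- good eventual set
  have hEev : ∀ᶠ z in nhds w, (γ z = γ w + F z ^ n ∧ z ∈ U) := by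
    have ev1 : ∀ᶠ z in nhds w, hf z ≠ 0 := hh_an.continuousAt.eventually_ne hh0
    filter_upwards [ev1, hev', hU.eventually_mem hw] with z h1 h2 h3
    refine ⟨?_, h3⟩
    have hφn : φ z ^ n = hf z := by
      have e1 : (n : ℂ) * (Complex.log (hf z / hf w) / n) = Complex.log (hf z / hf w) := by
        field_simp
      have e2 : (n : ℂ) * (Complex.log (hf w) / n) = Complex.log (hf w) := by
        field_simp
      rw [hφ_def, mul_pow, ← Complex.exp_nat_mul, ← Complex.exp_nat_mul, e1, e2,
        Complex.exp_log (div_ne_zero h1 hh0), Complex.exp_log hh0,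
        div_mul_cancel₀ _ hh0]
    have : F z ^ n = (z - w) ^ n * hf z := by
      rw [hF_def, mul_pow, hφn]
    rw [this, ← h2]; ring
  have hEmem : {z | γ z = γ w + F z ^ n ∧ z ∈ U} ∈ nhds w := hEev
  have himg : F '' {z | γ z = γ w + F z ^ n ∧ z ∈ U} ∈ nhds (0 : ℂ) := by
    rw [← hmap]
    exact Filter.image_mem_map hEmem
  obtain ⟨ε, hε, hball⟩ := Metric.mem_nhds_iff.1 himg
  -- the root of unity
  set ζ : ℂ := Complex.exp (2 * Real.pi * Complex.I / n) with hζ_def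
  have hζn : ζ ^ n = 1 := by
    rw [hζ_def, ← Complex.exp_nat_mul]
    have : (n : ℂ) * (2 * Real.pi * Complex.I / n) = 2 * Real.pi * Complex.I := by
      field_simp
    rw [this, Complex.exp_two_pi_mul_I]
  have hζ1 : ζ ≠ 1 := by
    rw [hζ_def]
    intro hcon
    obtain ⟨k, hk⟩ := Complex.exp_eq_one_iff.1 hcon
    have h2pi : (2 * Real.pi * Complex.I : ℂ) ≠ 0 := by
      simp [Complex.I_ne_zero, Real.pi_ne_zero]
    have : (k : ℂ) * n = 1 := by
      field_simp at hk
      have hA : (Complex.I * (2 * (Real.pi : ℂ))) ≠ 0 := by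
        simp [Complex.I_ne_zero, Real.pi_ne_zero]
      have h' : ((k : ℂ) * n) * (Complex.I * (2 * (Real.pi : ℂ))) =
          (1 : ℂ) * (Complex.I * (2 * (Real.pi : ℂ))) := by
        linear_combination (-(Complex.I * (2 * (Real.pi : ℂ)))) * hk
      exact mul_right_cancel₀ hA h'
    have hZ : (k : ℤ) * n = 1 := by exact_mod_cast this
    have : (n : ℤ) ≤ 1 := Int.le_of_dvd one_pos ⟨k, by linarith [hZ]⟩
    omega
  have hζabs : ‖ζ‖ = 1 := by
    have : ζ = Complex.exp ((2 * Real.pi / n : ℝ) * Complex.I) := by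
      rw [hζ_def]; push_cast; ring_nf
    rw [this, Complex.norm_exp_ofReal_mul_I]
  -- pick two preimages
  have habs_u : ‖((ε : ℂ)/2)‖ = ε/2 := by
    rw [norm_div, Complex.norm_of_nonneg hε.le, Complex.norm_two]
  have humem : ((ε : ℂ)/2) ∈ Metric.ball (0:ℂ) ε := by
    rw [Metric.mem_ball, dist_zero_right, habs_u]; linarith
  have hζumem : ζ * ((ε : ℂ)/2) ∈ Metric.ball (0:ℂ) ε := by
    rw [Metric.mem_ball, dist_zero_right, norm_mul, hζabs, one_mul,
      habs_u]
    linarith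
  obtain ⟨z₁, hz₁, hFz₁⟩ := hball humem
  obtain ⟨z₂, hz₂, hFz₂⟩ := hball hζumem
  have hγeq : γ z₁ = γ z₂ := by
    rw [hz₁.1, hz₂.1, hFz₁, hFz₂, mul_pow, hζn, one_mul]
  have hz12 : z₁ = z₂ := hinj hz₁.2 hz₂.2 hγeq
  have hu_eq : ((ε : ℂ)/2) = ζ * ((ε : ℂ)/2) := by rw [← hFz₂, ← hz12, hFz₁]
  have hune : ((ε : ℂ)/2) ≠ 0 := by
    intro hcon
    rw [hcon, norm_zero] at habs_u
    linarith
  exact hζ1 (mul_right_cancel₀ hune (by rw [one_mul]; exact hu_eq)).symm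

theorem isOpen_image_of_injOn {U : Set ℂ} {γ : ℂ → ℂ} (hU : IsOpen U)
    (hγ : DifferentiableOn ℂ γ U) (hinj : Set.InjOn γ U) {s : Set ℂ}
    (hs : IsOpen s) (hsub : s ⊆ U) : IsOpen (γ '' s) := by
  rw [isOpen_iff_mem_nhds]
  rintro y ⟨x, hxs, rfl⟩
  have hx : x ∈ U := hsub hxs
  obtain ⟨p, hp⟩ := hγ.analyticOnNhd hU x hx
  have hstrict := hp.hasStrictDerivAt
  have hd : ((p 1) fun _ => 1) = deriv γ x := hstrict.hasDerivAt.deriv.symm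
  rw [hd] at hstrict
  rw [← hstrict.map_nhds_eq (deriv_ne_zero_of_injOn hU hγ hinj hx)]
  exact Filter.image_mem_map (hs.mem_nhds hxs)

theorem abs_eq_one_on_frontier {D : Set ℂ} (hDo : IsOpen D) {Bf : ℂ → ℂ} {Vn : Set ℂ}
    (hV : IsOpen Vn) (hcl : closure D ⊆ Vn) (hdiff : DifferentiableOn ℂ Bf Vn)
    (hmaps : Set.MapsTo Bf D (Metric.ball 0 1))
    (hcomp : ∀ L : Set ℂ, L ⊆ Metric.ball 0 1 → IsCompact L → IsCompact {z ∈ D | Bf z ∈ L})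
    {z : ℂ} (hz : z ∈ frontier D) : ‖Bf z‖ = 1 := by
  have hzc : z ∈ closure D := frontier_subset_closure hz
  have hzV : z ∈ Vn := hcl hzc
  have hcont : ContinuousAt Bf z := (hdiff.differentiableAt (hV.mem_nhds hzV)).continuousAt
  have hle : ‖Bf z‖ ≤ 1 := by
    have h1 : ContinuousOn Bf (closure D) := hdiff.continuousOn.mono hcl
    have h2 : Bf z ∈ closure (Bf '' D) := h1.image_closure ⟨z, hzc, rfl⟩
    have h3 : closure (Bf '' D) ⊆ closure (Metric.ball (0:ℂ) 1) :=
      closure_mono hmaps.image_subset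
    have h4 := h3 h2
    rw [closure_ball (0:ℂ) one_ne_zero, mem_closedBall_zero_iff] at h4
    exact h4
  by_contra hne
  have hlt : ‖Bf z‖ < 1 := lt_of_le_of_ne hle hne
  set r := ‖Bf z‖ with hr
  set L := Metric.closedBall (0:ℂ) ((1+r)/2) with hL
  have hLsub : L ⊆ Metric.ball (0:ℂ) 1 := Metric.closedBall_subset_ball (by linarith)
  have hS := hcomp L hLsub (isCompact_closedBall _ _)
  have hzS : z ∈ closure {x ∈ D | Bf x ∈ L} := by
    rw [mem_closure_iff_nhds]
    intro t ht
    have habs : ContinuousAt (fun x => ‖Bf x‖) z :=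
      continuous_norm.continuousAt.comp hcont
    have hev : {x | ‖Bf x‖ < (1+r)/2} ∈ nhds z :=
      habs.preimage_mem_nhds (Iio_mem_nhds (by linarith))
    have hmem : t ∩ {x | ‖Bf x‖ < (1+r)/2} ∈ nhds z := Filter.inter_mem ht hev
    obtain ⟨x, ⟨hxt, hxlt⟩, hxD⟩ := (mem_closure_iff_nhds.1 hzc) _ hmem
    refine ⟨x, hxt, hxD, ?_⟩
    rw [hL, mem_closedBall_zero_iff]
    exact le_of_lt hxlt
  rw [hS.isClosed.closure_eq] at hzS
  have hzD : z ∈ D := hzS.1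
  rw [frontier, hDo.interior_eq] at hz
  exact hz.2 hzD

theorem interval_length_le_pi_div {f f' : ℝ → ℂ} {a b L : ℝ} (hab : a ≤ b) (hL : 0 < L)
    (hd : ∀ t ∈ Icc a b, HasDerivAt f (f' t) t)
    (habs : ∀ t ∈ Icc a b, ‖f t‖ = 1)
    (him : ∀ t ∈ Icc a b, (f t).im ≠ 0)
    (hlow : ∀ t ∈ Icc a b, L ≤ ‖f' t‖) : b - a ≤ Real.pi / L := by
  rcases eq_or_lt_of_le hab with rfl | hab'
  · simp
    positivity
  have hsq : ∀ t ∈ Icc a b, (f t).re ^ 2 + (f t).im ^ 2 = 1 := by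
    intro t ht
    have h1 := habs t ht
    have h2 : ‖f t‖ ^ 2 = 1 := by rw [h1]; norm_num
    rw [Complex.sq_norm, Complex.normSq_apply] at h2
    nlinarith [h2]
  have hre_lt : ∀ t ∈ Icc a b, (f t).re ^ 2 < 1 := by
    intro t ht
    have h1 := hsq t ht
    have h2 := him t ht
    nlinarith [sq_pos_of_ne_zero h2]
  have hne1 : ∀ t ∈ Icc a b, (f t).re ≠ 1 ∧ (f t).re ≠ -1 := by
    intro t ht
    constructor <;> intro hcon <;> (have := hre_lt t ht; rw [hcon] at this; nlinarith)
  set θ : ℝ → ℝ := fun t => Real.arccos ((f t).re) with hθ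
  set θ' : ℝ → ℝ := fun t => -(1 / Real.sqrt (1 - ((f t).re) ^ 2)) * (f' t).re with hθ'
  have hu : ∀ t ∈ Icc a b, HasDerivAt (fun s => (f s).re) ((f' t).re) t := by
    intro t ht
    exact (Complex.reCLM.hasFDerivAt.comp_hasDerivAt t (hd t ht))
  have hθd : ∀ t ∈ Icc a b, HasDerivAt θ (θ' t) t := by
    intro t ht
    have := (Real.hasDerivAt_arccos (hne1 t ht).2 (hne1 t ht).1).comp t (hu t ht)
    exact this
  have hkey : ∀ t ∈ Ioo a b, |θ' t| = ‖f' t‖ := by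
    intro t ht
    have ht' : t ∈ Icc a b := Ioo_subset_Icc_self ht
    have hq : HasDerivAt (fun s => (f s).re ^ 2 + (f s).im ^ 2)
        (2 * (f t).re * (f' t).re + 2 * (f t).im * (f' t).im) t := by
      have h1 := (hu t ht').pow 2
      have h2 := ((Complex.imCLM.hasFDerivAt.comp_hasDerivAt t (hd t ht'))).pow 2
      have h3 := h1.add h2
      exact h3.congr_deriv (by simp [Function.comp])
    have hq0 : 2 * (f t).re * (f' t).re + 2 * (f t).im * (f' t).im = 0 := by
      have hev : (fun s => (f s).re ^ 2 + (f s).im ^ 2) =ᶠ[nhds t] fun _ => 1 := by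
        filter_upwards [Icc_mem_nhds ht.1 ht.2] with s hs using hsq s hs
      have hd0 : deriv (fun s => (f s).re ^ 2 + (f s).im ^ 2) t = 0 := by
        rw [Filter.EventuallyEq.deriv_eq hev]; simp
      rw [← hq.deriv]; exact hd0
    set u := (f t).re
    set v := (f t).im
    set u' := (f' t).re
    set v' := (f' t).im
    have hv : v ≠ 0 := him t ht'
    have huv : u ^ 2 + v ^ 2 = 1 := hsq t ht'
    have hnorm2 : ‖f' t‖ ^ 2 = u' ^ 2 + v' ^ 2 := by
      rw [Complex.sq_norm, Complex.normSq_apply]; ring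
    have hsq' : u' ^ 2 = ‖f' t‖ ^ 2 * v ^ 2 := by
      rw [hnorm2]
      linear_combination (-(u' ^ 2)) * huv + ((u * u' - v * v') / 2) * hq0
    have hv2 : 1 - u ^ 2 = v ^ 2 := by linarith
    have h6 : Real.sqrt (1 - (f t).re ^ 2) = |v| := by rw [hv2, Real.sqrt_sq_eq_abs]
    have habs' : |θ' t| = |u'| / |v| := by
      rw [hθ']
      simp only [abs_mul, abs_neg]
      rw [h6, _root_.abs_of_nonneg (by positivity : (0:ℝ) ≤ 1 / |v|)]
      ring
    rw [habs']
    rw [div_eq_iff (abs_ne_zero.mpr hv)]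
    have h5 : |u'| = Real.sqrt (u' ^ 2) := (Real.sqrt_sq_eq_abs u').symm
    rw [h5, hsq', Real.sqrt_mul (by positivity), Real.sqrt_sq_eq_abs,
      Real.sqrt_sq_eq_abs, abs_norm]
  have hcont : ContinuousOn θ (Icc a b) := fun t ht => (hθd t ht).continuousAt.continuousWithinAt
  obtain ⟨c, hc, hslope⟩ := exists_hasDerivAt_eq_slope θ θ' hab' hcont
    (fun x hx => hθd x (Ioo_subset_Icc_self hx))
  have hbound : |θ b - θ a| ≤ Real.pi := by
    have h1 : 0 ≤ θ a := Real.arccos_nonneg _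
    have h2 : θ a ≤ Real.pi := Real.arccos_le_pi _
    have h3 : 0 ≤ θ b := Real.arccos_nonneg _
    have h4 : θ b ≤ Real.pi := Real.arccos_le_pi _
    rw [abs_le]; constructor <;> linarith
  have h1 : L ≤ ‖f' c‖ := hlow c (Ioo_subset_Icc_self hc)
  have h2 : |θ' c| = ‖f' c‖ := hkey c hc
  have hba : (0:ℝ) < b - a := by linarith
  have e1 : |θ' c| * (b - a) = |θ b - θ a| := by
    rw [hslope, abs_div, _root_.abs_of_pos hba, div_mul_cancel₀ _ (ne_of_gt hba)]
  have h5 : L * (b - a) ≤ Real.pi := by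
    have h7 : L ≤ |θ' c| := by rw [h2]; exact h1
    nlinarith [mul_le_mul_of_nonneg_right h7 (le_of_lt hba)]
  rw [le_div_iff₀ hL]
  linarith

private lemma ee_mem_sphere (t : ℝ) : Complex.exp (t * Complex.I) ∈ Metric.sphere (0:ℂ) 1 := by
  rw [mem_sphere_zero_iff_norm]
  exact Complex.norm_exp_ofReal_mul_I t

private lemma ee_dist_le (s t : ℝ) :
    dist (Complex.exp (s * Complex.I)) (Complex.exp (t * Complex.I)) ≤ |s - t| := by
  have h := Convex.norm_image_sub_le_of_norm_hasDerivWithin_le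
    (f := fun r : ℝ => Complex.exp (r * Complex.I))
    (f' := fun r : ℝ => Complex.exp (r * Complex.I) * Complex.I) (s := Set.univ) (C := 1)
    (fun x _ => (ee_hasDerivAt x).hasDerivWithinAt)
    (fun x _ => by
      rw [norm_mul, Complex.norm_exp_ofReal_mul_I, Complex.norm_I, mul_one])
    convex_univ (mem_univ t) (mem_univ s)
  simpa [dist_eq_norm, Real.norm_eq_abs] using h

private lemma exp_arg_of_abs_one {q : ℂ} (hq : ‖q‖ = 1) :
    Complex.exp ((Complex.arg q : ℂ) * Complex.I) = q := by
  have := Complex.norm_mul_exp_arg_mul_I q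
  rwa [hq, Complex.ofReal_one, one_mul] at this

private lemma arg_ee {r : ℝ} (h1 : -Real.pi < r) (h2 : r ≤ Real.pi) :
    Complex.arg (Complex.exp (r * Complex.I)) = r := by
  rw [Complex.exp_mul_I]
  exact Complex.arg_cos_add_sin_mul_I ⟨h1, h2⟩

private lemma arc_isOpen (mid ρ : ℝ) (hρ : ρ ≤ Real.pi / 2) :
    IsOpen {ζ : ℂ | ζ ≠ 0 ∧
      Complex.arg (ζ / Complex.exp (mid * Complex.I)) ∈ Ioo (-ρ) ρ} := by
  rw [isOpen_iff_mem_nhds]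
  rintro ζ ⟨hζ0, harg⟩
  have hq0 : ζ / Complex.exp (mid * Complex.I) ≠ 0 :=
    div_ne_zero hζ0 (Complex.exp_ne_zero _)
  have habs : |Complex.arg (ζ / Complex.exp (mid * Complex.I))| < Real.pi / 2 := by
    rw [abs_lt]
    constructor <;> [linarith [harg.1]; linarith [harg.2]]
  have hre : 0 < (ζ / Complex.exp (mid * Complex.I)).re := by
    rcases Complex.abs_arg_lt_pi_div_two_iff.1 habs with h | h
    · exact h
    · exact absurd h hq0
  have hslit : ζ / Complex.exp (mid * Complex.I) ∈ Complex.slitPlane :=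
    Complex.mem_slitPlane_iff.2 (Or.inl hre)
  have hcont : ContinuousAt (fun x : ℂ => Complex.arg (x / Complex.exp (mid * Complex.I))) ζ := by
    exact ContinuousAt.comp (f := fun x : ℂ => x / Complex.exp ((mid:ℝ) * Complex.I))
      (Complex.continuousAt_arg hslit) (continuousAt_id.div_const _)
  have h1 : {x : ℂ | Complex.arg (x / Complex.exp (mid * Complex.I)) ∈ Ioo (-ρ) ρ} ∈ nhds ζ :=
    hcont.preimage_mem_nhds (isOpen_Ioo.mem_nhds harg)
  have h2 : {x : ℂ | x ≠ 0} ∈ nhds ζ := isOpen_ne.mem_nhds hζ0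
  filter_upwards [h1, h2] with x hx1 hx2
  exact ⟨hx2, hx1⟩

private lemma arc_inter_sphere (mid ρ : ℝ) (hρ0 : 0 < ρ) (hρ : ρ ≤ Real.pi / 2) :
    Metric.sphere (0:ℂ) 1 ∩ {ζ : ℂ | ζ ≠ 0 ∧
        Complex.arg (ζ / Complex.exp (mid * Complex.I)) ∈ Ioo (-ρ) ρ}
      = (fun s : ℝ => Complex.exp (s * Complex.I)) '' Ioo (mid - ρ) (mid + ρ) := by
  have hπ := Real.pi_pos
  ext ζ
  constructor
  · rintro ⟨hsph, hζ0, harg⟩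
    have habsζ : ‖ζ‖ = 1 := by
      rw [mem_sphere_zero_iff_norm] at hsph; exact hsph
    have habsq : ‖ζ / Complex.exp (mid * Complex.I)‖ = 1 := by
      rw [norm_div, habsζ, Complex.norm_exp_ofReal_mul_I, div_one]
    have hq := exp_arg_of_abs_one habsq
    set r := Complex.arg (ζ / Complex.exp (mid * Complex.I)) with hr
    refine ⟨mid + r, ⟨by linarith [harg.1], by linarith [harg.2]⟩, ?_⟩
    have : Complex.exp (((mid + r : ℝ) : ℂ) * Complex.I)
        = Complex.exp ((r : ℂ) * Complex.I) * Complex.exp ((mid : ℝ) * Complex.I) := by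
      rw [← Complex.exp_add]
      congr 1
      push_cast
      ring
    show Complex.exp (((mid + r : ℝ) : ℂ) * Complex.I) = ζ
    rw [this, hq, div_mul_cancel₀ _ (Complex.exp_ne_zero _)]
  · rintro ⟨s, hs, rfl⟩
    refine ⟨ee_mem_sphere s, Complex.exp_ne_zero _, ?_⟩
    have hdiv : Complex.exp ((s : ℂ) * Complex.I) / Complex.exp ((mid : ℝ) * Complex.I)
        = Complex.exp (((s - mid : ℝ) : ℂ) * Complex.I) := by
      rw [← Complex.exp_sub]
      congr 1
      push_cast
      ring
    rw [hdiv, arg_ee (by linarith [hs.1]) (by linarith [hs.2])]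
    exact ⟨by linarith [hs.1], by linarith [hs.2]⟩

private lemma comp_hasDerivAt {U Vn : Set ℂ} {γ Bf : ℂ → ℂ}
    (hU : IsOpen U) (hγ : DifferentiableOn ℂ γ U) (hV : IsOpen Vn)
    (hB : DifferentiableOn ℂ Bf Vn) {t : ℝ}
    (htU : Complex.exp (t * Complex.I) ∈ U)
    (htV : γ (Complex.exp (t * Complex.I)) ∈ Vn) :
    HasDerivAt (fun s : ℝ => Bf (γ (Complex.exp (s * Complex.I))))
      (deriv Bf (γ (Complex.exp (t * Complex.I))) *
        (deriv γ (Complex.exp (t * Complex.I)) * (Complex.exp (t * Complex.I) * Complex.I))) t := by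
  have h1 : HasDerivAt (fun ζ : ℂ => ζ * Complex.I) Complex.I (t : ℂ) := hasDerivAt_mul_const _
  have h2 := (Complex.hasDerivAt_exp ((t:ℂ) * Complex.I)).comp (t:ℂ) h1
  have h3 := ((hγ.differentiableAt (hU.mem_nhds htU)).hasDerivAt).comp (t:ℂ) h2
  have h4 := ((hB.differentiableAt (hV.mem_nhds htV)).hasDerivAt).comp (t:ℂ) h3
  exact h4.comp_ofReal

private lemma not_M_eq_zero {D : Set ℂ} (hDo : IsOpen D)
    {U : Set ℂ} {γ : ℂ → ℂ} (hU : IsOpen U) (hsub : Metric.sphere (0:ℂ) 1 ⊆ U)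
    (hγd : DifferentiableOn ℂ γ U) (hinj : Set.InjOn γ U)
    (hΓsub : γ '' Metric.sphere (0:ℂ) 1 ⊆ frontier D)
    {Bf : ℂ → ℂ} {Vn : Set ℂ} (hV : IsOpen Vn) (hcl : closure D ⊆ Vn)
    (hdiff : DifferentiableOn ℂ Bf Vn)
    (hmaps : Set.MapsTo Bf D (Metric.ball 0 1))
    (hcomp : ∀ L : Set ℂ, L ⊆ Metric.ball 0 1 → IsCompact L → IsCompact {z ∈ D | Bf z ∈ L})
    (hder : ∀ z ∈ frontier D, deriv Bf z = 0) : False := by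
  have hmemΓ : ∀ t : ℝ, γ (Complex.exp (t * Complex.I)) ∈ frontier D := fun t =>
    hΓsub ⟨_, ee_mem_sphere t, rfl⟩
  have hmemV : ∀ t : ℝ, γ (Complex.exp (t * Complex.I)) ∈ Vn := fun t =>
    hcl (frontier_subset_closure (hmemΓ t))
  set g : ℝ → ℂ := fun t => Bf (γ (Complex.exp (t * Complex.I))) with hg
  have hgd : ∀ t : ℝ, HasDerivAt g 0 t := by
    intro t
    have := comp_hasDerivAt hU hγd hV hdiff (hsub (ee_mem_sphere t)) (hmemV t)
    rwa [hder _ (hmemΓ t), zero_mul] at this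
  have hgconst : ∀ t : ℝ, g t = g 0 :=
    fun t => is_const_of_deriv_eq_zero (fun s => (hgd s).differentiableAt)
      (fun s => (hgd s).deriv) t 0
  -- Bf is constant on the curve
  have hBconst : ∀ x ∈ γ '' Metric.sphere (0:ℂ) 1, Bf x = g 0 := by
    rintro x ⟨w, hw, rfl⟩
    have habsw : ‖w‖ = 1 := by
      rw [mem_sphere_zero_iff_norm] at hw; exact hw
    have h5 : Bf (γ (Complex.exp ((Complex.arg w : ℝ) * Complex.I)))
        = Bf (γ (Complex.exp ((0:ℝ) * Complex.I))) := hgconst (Complex.arg w)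
    rw [exp_arg_of_abs_one habsw] at h5
    exact h5
  set z₀ : ℂ := γ (Complex.exp ((0:ℝ) * Complex.I)) with hz₀def
  have hz₀Γ : z₀ ∈ frontier D := hmemΓ 0
  have hz₀V : z₀ ∈ Vn := hmemV 0
  -- frequently equal to the constant near z₀
  have htend : Filter.Tendsto (fun s : ℝ => γ (Complex.exp (s * Complex.I)))
      (nhdsWithin 0 (Set.Ioi 0)) (nhdsWithin z₀ {z₀}ᶜ) := by
    rw [tendsto_nhdsWithin_iff]
    constructor
    · have hcont : ContinuousAt (fun s : ℝ => γ (Complex.exp (s * Complex.I))) 0 := by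
        have h1 : ContinuousAt γ (Complex.exp ((0:ℝ) * Complex.I)) :=
          (hγd.differentiableAt (hU.mem_nhds (hsub (ee_mem_sphere 0)))).continuousAt
        exact h1.comp (x := (0:ℝ)) (ee_hasDerivAt 0).continuousAt
      exact hcont.continuousWithinAt
    · filter_upwards [Ioo_mem_nhdsGT_of_mem (show (0:ℝ) ∈ Ico 0 Real.pi from ⟨le_rfl, Real.pi_pos⟩)] with s hs
      intro hcon
      have hne : Complex.exp (s * Complex.I) ≠ Complex.exp ((0:ℝ) * Complex.I) := by
        intro he
        obtain ⟨k, hk⟩ := Complex.exp_eq_exp_iff_exists_int.1 he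
        have hk' : (s : ℂ) = (k : ℂ) * (2 * Real.pi) := by
          apply mul_right_cancel₀ Complex.I_ne_zero
          rw [hk]
          push_cast
          ring
        have hs' : s = k * (2 * Real.pi) := by exact_mod_cast hk'
        have hπ := Real.pi_pos
        rcases le_or_gt k 0 with hk0 | hk0
        · have : (k:ℝ) * (2 * Real.pi) ≤ 0 := by
            apply mul_nonpos_of_nonpos_of_nonneg
            · exact_mod_cast hk0
            · positivity
          linarith [hs.1, hs' ▸ this]
        · have hk1 : (1:ℝ) ≤ (k:ℝ) := by exact_mod_cast hk0
          have hπ := Real.pi_pos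
          have h6 : (2*Real.pi) ≤ (k:ℝ)*(2*Real.pi) :=
            le_mul_of_one_le_left (by positivity) hk1
          linarith [hs.2, hs']
      exact hne (hinj (hsub (ee_mem_sphere s)) (hsub (ee_mem_sphere 0))
        (Set.mem_singleton_iff.1 hcon))
  have hfreq : ∃ᶠ x in nhdsWithin z₀ {z₀}ᶜ, Bf x = g 0 := by
    apply htend.frequently
    apply Filter.Eventually.frequently
    filter_upwards with s
    exact hBconst _ ⟨_, ee_mem_sphere s, rfl⟩
  -- identity theorem on the connected component of Vn
  set W := connectedComponentIn Vn z₀ with hW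
  have hWopen : IsOpen W := hV.connectedComponentIn
  have hWsub : W ⊆ Vn := connectedComponentIn_subset _ _
  have hz₀W : z₀ ∈ W := mem_connectedComponentIn hz₀V
  have hWpre : IsPreconnected W := isPreconnected_connectedComponentIn
  have heq : Set.EqOn Bf (fun _ => g 0) W :=
    ((hdiff.mono hWsub).analyticOnNhd hWopen).eqOn_of_preconnected_of_frequently_eq
      analyticOnNhd_const hWpre hz₀W hfreq
  obtain ⟨y, hyW, hyD⟩ := (_root_.mem_closure_iff.1 (frontier_subset_closure hz₀Γ)) W hWopen hz₀W
  have h1 : ‖Bf y‖ < 1 := by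
    have := hmaps hyD
    rwa [Metric.mem_ball, dist_zero_right] at this
  have h2 : ‖g 0‖ = 1 := by
    rw [← hBconst z₀ ⟨_, ee_mem_sphere 0, rfl⟩]
    exact abs_eq_one_on_frontier hDo hV hcl hdiff hmaps hcomp hz₀Γ
  rw [heq hyW] at h1
  rw [h2] at h1
  exact lt_irrefl _ h1

end EdgeDiamAux

/-- **Edge-diameter lemma** (content of Proposition 4.8 for boundary edges). Let `D` be an
analytic domain and `(Bₙ)` a sequence of proper holomorphic maps `D → 𝔻`, each extending
holomorphically across `∂D`, with `n/M ≤ |Bₙ'(z)| ≤ nM` on `∂D`. With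
`𝒱ₙ = {z ∈ ∂D : Bₙ(z) ∈ ℝ}`, the maximal diameter of a connected component of `∂D \ 𝒱ₙ`
tends to `0` as `n → ∞`. -/
theorem edge_diameter_tendsto_zero
    (D : Set ℂ) (hD : IsAnalyticDomain D) (M : ℝ)
    (B : ℕ → ℂ → ℂ) (V : ℕ → Set ℂ)
    (h : ∀ n : ℕ, 1 ≤ n →
      IsOpen (V n) ∧ closure D ⊆ V n ∧ DifferentiableOn ℂ (B n) (V n) ∧
      IsProperHoloToDisc (B n) D ∧
      ∀ z ∈ frontier D,
        (n : ℝ) / M ≤ ‖deriv (B n) z‖ ∧ ‖deriv (B n) z‖ ≤ (n : ℝ) * M) :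
    ∀ η : ℝ, 0 < η → ∃ N : ℕ, ∀ n : ℕ, N ≤ n →
      ∀ z ∈ frontier D \ vertexSet (B n) D,
        Metric.diam (connectedComponentIn (frontier D \ vertexSet (B n) D) z) < η := by
  obtain ⟨hDo, hDconn, m, Γ, hΓ, hdisj, hfront⟩ := hD
  choose U γ hUo hsph hγd hγinj hΓeq using hΓ
  have hΓsub : ∀ j, Γ j ⊆ frontier D := fun j => by
    rw [hfront]; exact subset_iUnion Γ j
  intro η hη
  rcases Set.eq_empty_or_nonempty (frontier D) with hKem | hKne
  · refine ⟨0, fun n _ z hz => absurd hz.1 ?_⟩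
    rw [hKem]; exact notMem_empty z
  have hM : 0 < M := by
    obtain ⟨z₀, hz₀⟩ := hKne
    obtain ⟨hV1, hcl1, hd1, ⟨hBd1, hBm1, hBc1⟩, hder1⟩ := h 1 le_rfl
    rcases lt_trichotomy M 0 with hMlt | hMeq | hMpos
    · exfalso
      have h2 := (hder1 z₀ hz₀).2
      have h3 := norm_nonneg (deriv (B 1) z₀)
      push_cast at h2
      nlinarith
    · exfalso
      obtain ⟨i, hi⟩ := mem_iUnion.1 (hfront ▸ hz₀)
      have hder0 : ∀ z ∈ frontier D, deriv (B 1) z = 0 := by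
        intro z hz
        have h2 := (hder1 z hz).2
        rw [hMeq, mul_zero] at h2
        exact norm_eq_zero.1 (le_antisymm h2 (norm_nonneg _))
      exact not_M_eq_zero hDo (hUo i) (hsph i) (hγd i) (hγinj i)
        (by rw [← hΓeq i]; exact hΓsub i) hV1 hcl1 hd1 hBm1 hBc1 hder0
    · exact hMpos
  have hmin : ∀ i, ∃ ci : ℝ, 0 < ci ∧ ∀ w ∈ Metric.sphere (0:ℂ) 1, ci ≤ ‖deriv (γ i) w‖ := by
    intro i
    have han : AnalyticOnNhd ℂ (deriv (γ i)) (U i) := ((hγd i).analyticOnNhd (hUo i)).deriv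
    have hcont : ContinuousOn (fun w => ‖deriv (γ i) w‖) (Metric.sphere (0:ℂ) 1) :=
      (han.continuousOn.mono (hsph i)).norm
    obtain ⟨w0, hw0, hmin0⟩ := (isCompact_sphere (0:ℂ) 1).exists_isMinOn
      (NormedSpace.sphere_nonempty.mpr zero_le_one) hcont
    exact ⟨‖deriv (γ i) w0‖, norm_pos_iff.mpr
      (deriv_ne_zero_of_injOn (hUo i) (hγd i) (hγinj i) (hsph i hw0)), fun w hw => hmin0 hw⟩
  choose c hc0 hcle using hmin
  have hUC : ∀ i, ∃ ε : ℝ, 0 < ε ∧ ∀ w ∈ Metric.sphere (0:ℂ) 1, ∀ w' ∈ Metric.sphere (0:ℂ) 1,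
      dist w w' < ε → dist (γ i w) (γ i w') < η / 3 := by
    intro i
    have h1 := (isCompact_sphere (0:ℂ) 1).uniformContinuousOn_of_continuous
      ((hγd i).continuousOn.mono (hsph i))
    rw [Metric.uniformContinuousOn_iff] at h1
    obtain ⟨ε, hε, hprop⟩ := h1 (η/3) (by linarith)
    exact ⟨ε, hε, fun w hw w' hw' hd => hprop w hw w' hw' hd⟩
  choose ε hε0 hεprop using hUC
  have hδex : ∀ i : Fin m, ∃ d : ℝ, (0 < d ∧ d ≤ Real.pi / 2) ∧ 2 * d < ε i := fun i =>
    ⟨min (ε i / 3) (Real.pi / 2), ⟨lt_min (by linarith [hε0 i]) (by positivity), min_le_right _ _⟩,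
      by have h1 := min_le_left (ε i / 3) (Real.pi / 2); linarith [hε0 i]⟩
  choose δ hδ hδε using hδex
  have hδ0 : ∀ i, 0 < δ i := fun i => (hδ i).1
  have hδπ : ∀ i, δ i ≤ Real.pi / 2 := fun i => (hδ i).2
  have hNex : ∀ i : Fin m, ∃ Ni : ℕ, Real.pi * M / (δ i * c i) < Ni := fun i => exists_nat_gt _
  choose Nf hNf using hNex
  refine ⟨1 + Finset.univ.sup Nf, fun n hn z hz => ?_⟩
  have hn1 : 1 ≤ n := le_trans (by omega) hn
  obtain ⟨hVo, hclV, hBd, ⟨hBdD, hBmaps, hBcomp⟩, hBder⟩ := h n hn1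
  set S := frontier D \ vertexSet (B n) D with hSdef
  have hz1 : z ∈ frontier D := hz.1
  have hzim : (B n z).im ≠ 0 := fun h0 => hz.2 ⟨hz1, h0⟩
  obtain ⟨i, hi⟩ := mem_iUnion.1 (hfront ▸ hz1)
  rw [hΓeq i] at hi
  obtain ⟨w, hw, hwz⟩ := hi
  have habsw : ‖w‖ = 1 := by
    rwa [mem_sphere_zero_iff_norm] at hw
  set t₀ : ℝ := Complex.arg w with ht₀def
  have ht₀ : Complex.exp ((t₀ : ℝ) * Complex.I) = w := exp_arg_of_abs_one habsw
  have hmemΓ : ∀ t : ℝ, γ i (Complex.exp (t * Complex.I)) ∈ Γ i := fun t => by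
    rw [hΓeq i]; exact ⟨_, ee_mem_sphere t, rfl⟩
  have hmemF : ∀ t : ℝ, γ i (Complex.exp (t * Complex.I)) ∈ frontier D := fun t =>
    hΓsub i (hmemΓ t)
  -- density of vertices
  have hdens : ∀ a : ℝ, ∃ s ∈ Icc a (a + δ i),
      (B n (γ i (Complex.exp (s * Complex.I)))).im = 0 := by
    intro a
    by_contra hcon
    push_neg at hcon
    set L := (n : ℝ) / M * c i with hL
    have hn0 : (0:ℝ) < n := by exact_mod_cast hn1
    have hLpos : 0 < L := mul_pos (div_pos hn0 hM) (hc0 i)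
    have hlow : ∀ t ∈ Icc a (a + δ i),
        L ≤ ‖deriv (B n) (γ i (Complex.exp (t * Complex.I))) *
          (deriv (γ i) (Complex.exp (t * Complex.I)) *
            (Complex.exp (t * Complex.I) * Complex.I))‖ := by
      intro t ht
      have h1 := (hBder _ (hmemF t)).1
      have h2 := hcle i _ (ee_mem_sphere t)
      have h3 : ‖Complex.exp ((t:ℝ) * Complex.I) * Complex.I‖ = 1 := by
        rw [norm_mul, Complex.norm_exp_ofReal_mul_I, Complex.norm_I, mul_one]
      rw [norm_mul, norm_mul, h3, mul_one]
      exact mul_le_mul h1 h2 (le_of_lt (hc0 i)) (norm_nonneg _)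
    have hlen := interval_length_le_pi_div
      (f := fun s : ℝ => B n (γ i (Complex.exp (s * Complex.I))))
      (f' := fun s : ℝ => deriv (B n) (γ i (Complex.exp (s * Complex.I))) *
        (deriv (γ i) (Complex.exp (s * Complex.I)) *
          (Complex.exp (s * Complex.I) * Complex.I)))
      (a := a) (b := a + δ i) (by linarith [hδ0 i]) hLpos
      (fun t _ => comp_hasDerivAt (hUo i) (hγd i) hVo hBd (hsph i (ee_mem_sphere t))
        (hclV (frontier_subset_closure (hmemF t))))
      (fun t _ => abs_eq_one_on_frontier hDo hVo hclV hBd hBmaps hBcomp (hmemF t))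
      hcon hlow
    rw [show a + δ i - a = δ i by ring] at hlen
    have hπM : Real.pi / L = Real.pi * M / ((n:ℝ) * c i) := by
      rw [hL, show (n:ℝ)/M * c i = (n:ℝ) * c i / M by ring, div_div_eq_mul_div]
    have hNin : (Nf i : ℝ) < (n : ℝ) := by
      have h4 : Nf i ≤ Finset.univ.sup Nf := Finset.le_sup (Finset.mem_univ i)
      exact_mod_cast (by omega : Nf i < n)
    have e3 : Real.pi * M / (δ i * c i) < (n:ℝ) := lt_trans (hNf i) hNin
    have e4 : Real.pi * M < (n:ℝ) * (δ i * c i) := (div_lt_iff₀ (mul_pos (hδ0 i) (hc0 i))).1 e3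
    have e2 : δ i * ((n:ℝ) * c i) ≤ Real.pi * M := by
      rw [hπM] at hlen
      exact (le_div_iff₀ (mul_pos hn0 (hc0 i))).1 hlen
    nlinarith
  obtain ⟨s₁, hs₁I, hs₁im⟩ := hdens (t₀ - δ i)
  obtain ⟨s₂, hs₂I, hs₂im⟩ := hdens t₀
  rw [show t₀ - δ i + δ i = t₀ by ring] at hs₁I
  have hzee : γ i (Complex.exp ((t₀:ℝ) * Complex.I)) = z := by rw [ht₀, hwz]
  have hs₁t : s₁ < t₀ := by
    rcases lt_or_eq_of_le hs₁I.2 with h1 | h1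
    · exact h1
    · exfalso; apply hzim; rw [← hzee, ← h1]; exact hs₁im
  have hs₂t : t₀ < s₂ := by
    rcases lt_or_eq_of_le hs₂I.1 with h1 | h1
    · exact h1
    · exfalso; apply hzim; rw [← hzee, h1]; exact hs₂im
  have hs₁₂δ : s₂ - s₁ ≤ 2 * δ i := by
    have := hs₁I.1; have := hs₂I.2; linarith
  set ρ : ℝ := (s₂ - s₁)/2 with hρdef
  set mid : ℝ := (s₁ + s₂)/2 with hmiddef
  have hρ0 : 0 < ρ := by rw [hρdef]; linarith
  have hρπ : ρ ≤ Real.pi / 2 := by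
    rw [hρdef]; linarith [hδπ i]
  have hIoo : Ioo (mid - ρ) (mid + ρ) = Ioo s₁ s₂ := by
    rw [hmiddef, hρdef]; congr 1 <;> ring
  have hGopen := arc_isOpen mid ρ hρπ
  have hGeq := arc_inter_sphere mid ρ hρ0 hρπ
  rw [hIoo] at hGeq
  set A := (fun s : ℝ => Complex.exp (s * Complex.I)) '' Ioo s₁ s₂ with hAdef
  set W := γ i '' A with hWdef
  set Fc := γ i '' ((fun s : ℝ => Complex.exp (s * Complex.I)) '' Icc s₁ s₂) with hFcdef
  have hWF : W ⊆ Fc := image_mono (image_mono Ioo_subset_Icc_self)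
  have hzW : z ∈ W := ⟨_, ⟨t₀, ⟨hs₁t, hs₂t⟩, rfl⟩, hzee⟩
  have hFcComp : IsCompact Fc := by
    have h1 : Continuous (fun s : ℝ => Complex.exp (s * Complex.I)) :=
      Complex.continuous_exp.comp (Complex.continuous_ofReal.mul continuous_const)
    have h2 := (isCompact_Icc (a := s₁) (b := s₂)).image h1
    exact h2.image_of_continuousOn ((hγd i).continuousOn.mono
      (by rintro x ⟨s, _, rfl⟩; exact hsph i (ee_mem_sphere s)))
  have hΓclosed : ∀ j, IsClosed (Γ j) := fun j => by
    rw [hΓeq j]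
    exact ((isCompact_sphere (0:ℂ) 1).image_of_continuousOn
      ((hγd j).continuousOn.mono (hsph j))).isClosed
  set O₁ := γ i '' (U i ∩ {ζ : ℂ | ζ ≠ 0 ∧
    Complex.arg (ζ / Complex.exp (mid * Complex.I)) ∈ Ioo (-ρ) ρ}) with hO₁def
  have hO₁ : IsOpen O₁ := isOpen_image_of_injOn (hUo i) (hγd i) (hγinj i)
    ((hUo i).inter hGopen) inter_subset_left
  set O₂ := (⋃ j ∈ ({i}ᶜ : Set (Fin m)), Γ j)ᶜ with hO₂def
  have hO₂ : IsOpen O₂ :=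
    (Set.Finite.isClosed_biUnion (Set.toFinite _) fun j _ => hΓclosed j).isOpen_compl
  have hWchar : ∀ x, x ∈ S → (x ∈ W ↔ x ∈ O₁ ∩ O₂) := by
    intro x hxS
    constructor
    · rintro ⟨wx, hwxA, rfl⟩
      have hwxSG : wx ∈ Metric.sphere (0:ℂ) 1 ∩ {ζ : ℂ | ζ ≠ 0 ∧
          Complex.arg (ζ / Complex.exp (mid * Complex.I)) ∈ Ioo (-ρ) ρ} := by
        rw [hGeq]; exact hwxA
      refine ⟨⟨wx, ⟨hsph i hwxSG.1, hwxSG.2⟩, rfl⟩, ?_⟩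
      rw [hO₂def, mem_compl_iff]
      intro hmem
      rw [mem_iUnion₂] at hmem
      obtain ⟨j, hji, hmemj⟩ := hmem
      have hxi : γ i wx ∈ Γ i := by rw [hΓeq i]; exact ⟨wx, hwxSG.1, rfl⟩
      exact Set.disjoint_left.mp (hdisj (mem_univ j) (mem_univ i) hji) hmemj hxi
    · rintro ⟨hxO₁, hxO₂⟩
      obtain ⟨j, hj⟩ := mem_iUnion.1 (hfront ▸ hxS.1)
      have hji : j = i := by
        by_contra hne
        exact hxO₂ (mem_biUnion (show j ∈ ({i}ᶜ : Set (Fin m)) from hne) hj)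
      subst hji
      rw [hΓeq j] at hj
      obtain ⟨w', hw', hw'x⟩ := hj
      obtain ⟨u, hu, hux⟩ := hxO₁
      have heq : w' = u := hγinj j (hsph j hw') hu.1 (by rw [hw'x, hux])
      have hw'G : w' ∈ Metric.sphere (0:ℂ) 1 ∩ {ζ : ℂ | ζ ≠ 0 ∧
          Complex.arg (ζ / Complex.exp (mid * Complex.I)) ∈ Ioo (-ρ) ρ} :=
        ⟨hw', heq ▸ hu.2⟩
      rw [hGeq] at hw'G
      exact ⟨w', hw'G, hw'x⟩
  have hFchar : ∀ x, x ∈ S → (x ∈ W ↔ x ∈ Fc) := by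
    intro x hxS
    constructor
    · exact fun hxW => hWF hxW
    · rintro ⟨wx, ⟨s, hsI, rfl⟩, rfl⟩
      rcases eq_or_lt_of_le hsI.1 with h1 | h1
      · exact absurd ⟨hmemF s, by rw [← h1]; exact hs₁im⟩ hxS.2
      rcases eq_or_lt_of_le hsI.2 with h2 | h2
      · exact absurd ⟨hmemF s, by rw [h2]; exact hs₂im⟩ hxS.2
      · exact ⟨_, ⟨s, ⟨h1, h2⟩, rfl⟩, rfl⟩
  have hzS : z ∈ S := hz
  have hclopen : IsClopen (Subtype.val ⁻¹' W : Set S) := by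
    constructor
    · have he : (Subtype.val ⁻¹' W : Set S) = Subtype.val ⁻¹' Fc := by
        ext x; exact hFchar x.1 x.2
      rw [he]
      exact hFcComp.isClosed.preimage continuous_subtype_val
    · have he : (Subtype.val ⁻¹' W : Set S) = Subtype.val ⁻¹' (O₁ ∩ O₂) := by
        ext x; exact hWchar x.1 x.2
      rw [he]
      exact (hO₁.inter hO₂).preimage continuous_subtype_val
  have hkey : connectedComponentIn S z ⊆ Fc := by
    rw [connectedComponentIn_eq_image hzS]
    have hzT : (⟨z, hzS⟩ : S) ∈ (Subtype.val ⁻¹' W : Set S) := hzW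
    have hsub2 := hclopen.connectedComponent_subset hzT
    rintro x ⟨y, hy, rfl⟩
    exact hWF (hsub2 hy)
  have hFdiam : ∀ x ∈ Fc, ∀ y ∈ Fc, dist x y ≤ η/3 := by
    rintro x ⟨wx, ⟨s, hsI, rfl⟩, rfl⟩ y ⟨wy, ⟨s', hsI', rfl⟩, rfl⟩
    have hd1 := ee_dist_le s s'
    have h2 : |s - s'| < ε i := by
      rw [abs_lt]
      constructor <;>
        [linarith [hsI.1, hsI.2, hsI'.1, hsI'.2, hδε i, hs₁I.1, hs₂I.2];
         linarith [hsI.1, hsI.2, hsI'.1, hsI'.2, hδε i, hs₁I.1, hs₂I.2]]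
    exact (hεprop i _ (ee_mem_sphere s) _ (ee_mem_sphere s')
      (lt_of_le_of_lt hd1 h2)).le
  calc Metric.diam (connectedComponentIn S z)
      ≤ Metric.diam Fc := Metric.diam_mono hkey hFcComp.isBounded
    _ ≤ η/3 := Metric.diam_le_of_forall_dist_le (by linarith) hFdiam
    _ < η := by linarith
end
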